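/- arXiv:2201.09093 — 7 statements merged into one kernel-verified Lean document; each statement's English description precedes it below -/
import Mathlib

section
/- For strong digraphs G and H, each of order at least 2, the arc-strong connectivity of the Cartesian product satisfies λ(G □ H) = min{λ(G)·|V(H)|, λ(H)·|V(G)|, δ⁺(G)+δ⁺(H), δ⁻(G)+δ⁻(H)}. -/
/-- The set of arcs of a digraph. -/
def Digraph.ArcSet {V : Type*} (D : Digraph V) : Set (V × V) := {p | D.Adj p.1 p.2}

/-- Delete a set of arcs from a digraph. -/
def Digraph.DeleteArcs {V : Type*} (D : Digraph V) (F : Set (V × V)) : Digraph V :=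
  ⟨fun u v => D.Adj u v ∧ (u, v) ∉ F⟩

/-- A digraph is strong if every vertex can reach every other vertex by a directed walk. -/
def Digraph.IsStrong {V : Type*} (D : Digraph V) : Prop :=
  ∀ u v : V, Relation.ReflTransGen D.Adj u v

/-- The arc-strong connectivity: the minimum number of arcs whose removal
destroys strong connectivity. -/
noncomputable def Digraph.arcConn {V : Type*} (D : Digraph V) : ℕ :=
  sInf {k | ∃ F : Set (V × V), F ⊆ D.ArcSet ∧ F.ncard = k ∧ ¬ (D.DeleteArcs F).IsStrong}

noncomputable def Digraph.outDeg {V : Type*} (D : Digraph V) (v : V) : ℕ :=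
  {w | D.Adj v w}.ncard

noncomputable def Digraph.inDeg {V : Type*} (D : Digraph V) (v : V) : ℕ :=
  {w | D.Adj w v}.ncard

/-- Minimum out-degree. -/
noncomputable def Digraph.minOutDeg {V : Type*} (D : Digraph V) : ℕ := ⨅ v, D.outDeg v

/-- Minimum in-degree. -/
noncomputable def Digraph.minInDeg {V : Type*} (D : Digraph V) : ℕ := ⨅ v, D.inDeg v

/-- Cartesian product of digraphs. -/
def Digraph.cartProd {V W : Type*} (G : Digraph V) (H : Digraph W) : Digraph (V × W) :=
  ⟨fun a b => (G.Adj a.1 b.1 ∧ a.2 = b.2) ∨ (a.1 = b.1 ∧ H.Adj a.2 b.2)⟩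

/-- `B` is the arc set of an `S`-strong subgraph of `D`: the arcs of `B` are arcs of `D`,
and the subgraph with vertex set `S` together with all endpoints of `B`, and arc set `B`,
is strongly connected. -/
def Digraph.IsStrongSubgraphOn {V : Type*} (D : Digraph V) (S : Set V) (B : Set (V × V)) :
    Prop :=
  B ⊆ D.ArcSet ∧
  ∀ u ∈ S ∪ {v | ∃ e ∈ B, v = e.1 ∨ v = e.2},
    ∀ w ∈ S ∪ {v | ∃ e ∈ B, v = e.1 ∨ v = e.2},
      Relation.ReflTransGen (fun a b => (a, b) ∈ B) u w

/-- `λ_S(D)`: the maximum number of pairwise arc-disjoint `S`-strong subgraphs of `D`. -/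
noncomputable def Digraph.lambdaS {V : Type*} (D : Digraph V) (S : Set V) : ℕ :=
  sSup {k | ∃ f : Fin k → Set (V × V),
    (∀ i, D.IsStrongSubgraphOn S (f i)) ∧
    ∀ i j, i ≠ j → Disjoint (f i) (f j)}

/-- `λ_k(D)`: the strong subgraph `k`-arc-connectivity. -/
noncomputable def Digraph.lambdaK {V : Type*} (D : Digraph V) (k : ℕ) : ℕ :=
  sInf {m | ∃ S : Set V, S.ncard = k ∧ D.lambdaS S = m}

/-- The complete biorientation of an undirected graph. -/
def SimpleGraph.biorient {V : Type*} (G : SimpleGraph V) : Digraph V := ⟨G.Adj⟩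

/-- Edge-connectivity of an undirected graph: the minimum number of edges whose
removal disconnects the graph. -/
noncomputable def SimpleGraph.edgeConn {V : Type*} (G : SimpleGraph V) : ℕ :=
  sInf {k | ∃ F : Set (Sym2 V), F ⊆ G.edgeSet ∧ F.ncard = k ∧ ¬ (G.deleteEdges F).Connected}

/-- The directed cycle on `n` vertices. -/
def dirCycle (n : ℕ) : Digraph (Fin n) :=
  ⟨fun i j => (j : ℕ) = ((i : ℕ) + 1) % n⟩

/-- The complete biorientation of the cycle on `n` vertices. -/
def biCycle (n : ℕ) : Digraph (Fin n) :=
  ⟨fun i j => (j : ℕ) = ((i : ℕ) + 1) % n ∨ (i : ℕ) = ((j : ℕ) + 1) % n⟩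

/-- The complete digraph on `n` vertices. -/
def completeDigraph (n : ℕ) : Digraph (Fin n) := ⟨fun i j => i ≠ j⟩

/-! A set `S` of vertices of `G □ H` meets each copy `V(G) × {w}` in a row `S_w` and each copy
`{v} × V(H)` in a column `S^v`, and every arc leaving `S` lies in exactly one copy, so
`|∂⁺S| = ∑_w |∂⁺_G S_w| + ∑_v |∂⁺_H S^v|`. If every row is nonempty and proper, the rows alone
give `λ(G)|V(H)|`; likewise for the columns. Otherwise a trivial row and a trivial column meet in a
vertex, so both are empty or both are full, and replacing `S` by `Sᶜ` in the reversed product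
(which swaps `δ⁺` and `δ⁻`) we may assume both empty. For `(v₁, w₁) ∈ S`, the row `R = S_{w₁}`
has `|∂⁺R| ≥ δ⁺(G) + 1 - |R|`, and each of the `|T| - 1` other rows through the column
`T = S^{v₁}` is nonempty and proper, hence contributes at least one arc; together with the
symmetric count in `H` the deficits cancel, leaving `δ⁺(G) + δ⁺(H)`.

The upper bounds are the cuts of `S × V(H)` and `V(G) × T` for minimum cuts `S`, `T`, of a vertex
of minimum out-degree, and of the complement of a vertex of minimum in-degree. -/

open Finset

namespace Digraph

variable {V W : Type*}

open scoped Classical in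
noncomputable def outArcs [Fintype V] (D : Digraph V) (S : Set V) : Finset (V × V) :=
  univ.filter fun p => p.1 ∈ S ∧ p.2 ∉ S ∧ D.Adj p.1 p.2

def reverse (D : Digraph V) : Digraph V := ⟨fun u v => D.Adj v u⟩

section Cuts

variable [Fintype V] {D : Digraph V} {S : Set V}

@[simp]
lemma mem_outArcs {p : V × V} :
    p ∈ D.outArcs S ↔ p.1 ∈ S ∧ p.2 ∉ S ∧ D.Adj p.1 p.2 := by
  simp [outArcs]

lemma outArcs_subset_arcSet : ↑(D.outArcs S) ⊆ D.ArcSet := fun _ hp => (mem_outArcs.1 hp).2.2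

@[simp]
lemma outArcs_univ : D.outArcs Set.univ = ∅ := by ext; simp

@[simp]
lemma outArcs_empty : D.outArcs ∅ = ∅ := by ext; simp

lemma mem_of_reflTransGen_deleteArcs_outArcs {u v : V} (hu : u ∈ S)
    (h : Relation.ReflTransGen (D.DeleteArcs (D.outArcs S)).Adj u v) : v ∈ S := by
  induction h with
  | refl => exact hu
  | tail _ hstep ih =>
    by_contra hb
    exact hstep.2 (mem_outArcs.2 ⟨ih, hb, hstep.1⟩)

lemma not_isStrong_deleteArcs_outArcs (hS : S.Nonempty) (hSc : Sᶜ.Nonempty) :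
    ¬ (D.DeleteArcs (D.outArcs S)).IsStrong := fun h =>
  hSc.some_mem (mem_of_reflTransGen_deleteArcs_outArcs hS.some_mem (h _ _))

lemma one_le_card_outArcs (hD : D.IsStrong) (hS : S.Nonempty) (hSc : Sᶜ.Nonempty) :
    1 ≤ (D.outArcs S).card := by
  by_contra! h
  refine not_isStrong_deleteArcs_outArcs hS hSc fun u v =>
    Relation.ReflTransGen.mono (fun a b hab => ⟨hab, ?_⟩) _ _ (hD u v)
  simp_all

lemma arcConn_le_card_outArcs (hS : S.Nonempty) (hSc : Sᶜ.Nonempty) :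
    D.arcConn ≤ (D.outArcs S).card :=
  Nat.sInf_le ⟨_, outArcs_subset_arcSet, Set.ncard_coe_finset _,
    not_isStrong_deleteArcs_outArcs hS hSc⟩

lemma exists_card_outArcs_le_of_not_isStrong {F : Set (V × V)}
    (h : ¬ (D.DeleteArcs F).IsStrong) :
    ∃ S : Set V, S.Nonempty ∧ Sᶜ.Nonempty ∧ (D.outArcs S).card ≤ F.ncard := by
  simp only [IsStrong, not_forall] at h
  obtain ⟨u, v, huv⟩ := h
  refine ⟨{x | Relation.ReflTransGen (D.DeleteArcs F).Adj u x}, ⟨u, .refl⟩, ⟨v, huv⟩, ?_⟩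
  rw [← Set.ncard_coe_finset]
  refine Set.ncard_le_ncard (fun p hp => ?_) F.toFinite
  obtain ⟨h1, h2, h3⟩ := mem_outArcs.1 hp
  by_contra hpF
  exact h2 (h1.tail ⟨h3, hpF⟩)

lemma card_outArcs_singleton_le (a : V) : (D.outArcs {a}).card ≤ D.outDeg a := by
  rw [← Set.ncard_coe_finset, outDeg]
  refine (Set.ncard_le_ncard (t := Prod.mk a '' {w | D.Adj a w}) fun p hp => ?_).trans
    (Set.ncard_image_le (Set.toFinite _))
  obtain ⟨rfl, -, hA⟩ := mem_outArcs.1 hp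
  exact ⟨p.2, hA, rfl⟩

lemma outDeg_add_one_le (hD : Irreflexive D.Adj) {a : V} (ha : a ∈ S) :
    D.outDeg a + 1 ≤ (D.outArcs S).card + S.ncard := by
  have hsub : {w | D.Adj a w} ⊆ (S \ {a}) ∪ Prod.snd '' (D.outArcs S : Set (V × V)) := by
    intro w hw
    by_cases hwS : w ∈ S
    · exact .inl ⟨hwS, fun h => hD a (h ▸ hw)⟩
    · exact .inr ⟨(a, w), mem_outArcs.2 ⟨ha, hwS, hw⟩, rfl⟩
  have hdiff := Set.ncard_sdiff_singleton_of_mem ha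
  have himg := Set.ncard_image_le (f := Prod.snd) (D.outArcs S).finite_toSet
  have hS := (Set.ncard_pos (Set.toFinite S)).2 ⟨a, ha⟩
  have := (Set.ncard_le_ncard hsub).trans (Set.ncard_union_le _ _)
  rw [Set.ncard_coe_finset] at himg
  rw [outDeg]
  omega

lemma arcConn_mul_card_le_sum {ι : Type*} [Fintype ι] (R : ι → Set V)
    (hR : ∀ i, (R i).Nonempty ∧ (R i)ᶜ.Nonempty) :
    D.arcConn * Fintype.card ι ≤ ∑ i, (D.outArcs (R i)).card := by
  rw [mul_comm, ← smul_eq_mul, ← card_univ]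
  exact card_nsmul_le_sum _ _ _ fun i _ => arcConn_le_card_outArcs (hR i).1 (hR i).2

lemma outDeg_add_ncard_le_sum {ι : Type*} [Fintype ι] (hD : D.IsStrong)
    (hirr : Irreflexive D.Adj) (R : ι → Set V) {T : Set ι} {i : ι} (hi : i ∈ T) {a b : V}
    (ha : ∀ j ∈ T, a ∈ R j) (hb : ∀ j, b ∉ R j) :
    D.outDeg a + T.ncard ≤ ∑ j, (D.outArcs (R j)).card + (R i).ncard := by
  classical
  have hdeg := outDeg_add_one_le hirr (ha i hi)
  have hrest :
      (T.toFinset.erase i).card ≤ ∑ j ∈ T.toFinset.erase i, (D.outArcs (R j)).card := by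
    simpa using card_nsmul_le_sum _ _ 1 fun j hj =>
      one_le_card_outArcs hD ⟨a, ha j (Set.mem_toFinset.1 (mem_of_mem_erase hj))⟩ ⟨b, hb j⟩
  have hsum := sum_le_sum_of_subset (f := fun j => (D.outArcs (R j)).card) (subset_univ T.toFinset)
  rw [← add_sum_erase _ _ (Set.mem_toFinset.2 hi), card_erase_of_mem (Set.mem_toFinset.2 hi),
    ← Set.ncard_eq_toFinset_card'] at *
  have hT := (Set.ncard_pos (Set.toFinite T)).2 ⟨i, hi⟩
  omega

variable [Nontrivial V]

lemma exists_card_outArcs_le_arcConn :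
    ∃ S : Set V, S.Nonempty ∧ Sᶜ.Nonempty ∧ (D.outArcs S).card ≤ D.arcConn := by
  obtain ⟨F, -, hF, hFs⟩ : D.arcConn ∈
      {k | ∃ F : Set (V × V), F ⊆ D.ArcSet ∧ F.ncard = k ∧ ¬ (D.DeleteArcs F).IsStrong} := by
    let v := Classical.arbitrary V
    exact Nat.sInf_mem ⟨_, _, outArcs_subset_arcSet, rfl, not_isStrong_deleteArcs_outArcs
      (Set.singleton_nonempty v) (Set.nonempty_compl_of_nontrivial v)⟩
  exact hF ▸ exists_card_outArcs_le_of_not_isStrong hFs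

lemma le_arcConn {k : ℕ} (h : ∀ S : Set V, S.Nonempty → Sᶜ.Nonempty → k ≤ (D.outArcs S).card) :
    k ≤ D.arcConn := by
  obtain ⟨S, hS, hSc, hcard⟩ := exists_card_outArcs_le_arcConn (D := D)
  exact (h S hS hSc).trans hcard

end Cuts

section Reverse

@[simp]
lemma reverse_adj {D : Digraph V} {u v : V} : D.reverse.Adj u v ↔ D.Adj v u := Iff.rfl

lemma IsStrong.reverse {D : Digraph V} (h : D.IsStrong) : D.reverse.IsStrong := fun u v =>
  Relation.reflTransGen_swap.2 (h v u)

lemma minOutDeg_reverse (D : Digraph V) : D.reverse.minOutDeg = D.minInDeg := rfl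

lemma cartProd_reverse (G : Digraph V) (H : Digraph W) :
    (G.cartProd H).reverse = G.reverse.cartProd H.reverse := by
  ext a b
  simp only [reverse_adj, cartProd]
  grind

lemma card_outArcs_reverse_compl [Fintype V] (D : Digraph V) (S : Set V) :
    (D.reverse.outArcs Sᶜ).card = (D.outArcs S).card :=
  card_nbij' Prod.swap Prod.swap
    (fun p => by simp only [mem_coe, mem_outArcs, Prod.fst_swap, Prod.snd_swap, reverse_adj,
      Set.mem_compl_iff, not_not]; tauto)
    (fun p => by simp only [mem_coe, mem_outArcs, Prod.fst_swap, Prod.snd_swap, reverse_adj,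
      Set.mem_compl_iff, not_not]; tauto)
    (fun p _ => p.swap_swap) (fun p _ => p.swap_swap)

end Reverse

section CartProd

variable [Fintype V] [Fintype W] (G : Digraph V) (H : Digraph W)

lemma card_outArcs_cartProd (S : Set (V × W)) :
    ((G.cartProd H).outArcs S).card =
      ∑ w, (G.outArcs ((·, w) ⁻¹' S)).card +
        ∑ v, (H.outArcs (Prod.mk v ⁻¹' S)).card := by
  classical
  rw [← card_sigma, ← card_sigma, ← card_disjSum]
  symm
  refine card_nbij'
    (Sum.elim (fun x => ((x.2.1, x.1), (x.2.2, x.1))) (fun x => ((x.1, x.2.1), (x.1, x.2.2))))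
    (fun a => if a.1.2 = a.2.2 then .inl ⟨a.1.2, (a.1.1, a.2.1)⟩
      else .inr ⟨a.1.1, (a.1.2, a.2.2)⟩)
    ?_ ?_ ?_ ?_
  · rintro (⟨w, p⟩ | ⟨v, p⟩) h <;> simp_all [cartProd]
  · rintro ⟨⟨v, w⟩, ⟨v', w'⟩⟩ h
    simp only [mem_coe, mem_outArcs] at h
    obtain ⟨h1, h2, ⟨hA, rfl⟩ | ⟨rfl, hA⟩⟩ := h
    · simp_all
    · have : w ≠ w' := by rintro rfl; exact h2 h1
      simp_all
  · rintro (⟨w, p⟩ | ⟨v, ⟨w, w'⟩⟩) h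
    · simp
    · obtain ⟨h1, h2, -⟩ : (v, w) ∈ S ∧ (v, w') ∉ S ∧ _ := by simpa using h
      have : w ≠ w' := by rintro rfl; exact h2 h1
      simp [this]
  · rintro ⟨⟨v, w⟩, ⟨v', w'⟩⟩ h
    simp only [mem_coe, mem_outArcs] at h
    obtain ⟨h1, h2, ⟨hA, rfl⟩ | ⟨rfl, hA⟩⟩ := h
    · simp
    · have : w ≠ w' := by rintro rfl; exact h2 h1
      simp [this]
lemma card_outArcs_cartProd_prod_univ (S : Set V) :
    ((G.cartProd H).outArcs (S ×ˢ Set.univ)).card = (G.outArcs S).card * Fintype.card W := by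
  classical
  simp [card_outArcs_cartProd, Set.mk_preimage_prod_right_eq_if, apply_ite, mul_comm]

lemma card_outArcs_cartProd_univ_prod (T : Set W) :
    ((G.cartProd H).outArcs (Set.univ ×ˢ T)).card = (H.outArcs T).card * Fintype.card V := by
  classical
  simp [card_outArcs_cartProd, Set.mk_preimage_prod_left_eq_if, apply_ite, mul_comm]

lemma card_outArcs_cartProd_singleton_le (a : V) (b : W) :
    ((G.cartProd H).outArcs {(a, b)}).card ≤ G.outDeg a + H.outDeg b := by
  classical
  rw [← Set.singleton_prod_singleton, card_outArcs_cartProd]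
  simp only [Set.mk_preimage_prod_left_eq_if, Set.mk_preimage_prod_right_eq_if, apply_ite,
    outArcs_empty, card_empty, Set.mem_singleton_iff, sum_ite_eq', mem_univ, if_true]
  exact add_le_add (card_outArcs_singleton_le a) (card_outArcs_singleton_le b)

lemma arcConn_cartProd_le_mul_card_left [Nontrivial V] [Nonempty W] :
    (G.cartProd H).arcConn ≤ G.arcConn * Fintype.card W := by
  obtain ⟨S, ⟨v, hv⟩, ⟨v', hv'⟩, hcard⟩ := G.exists_card_outArcs_le_arcConn
  obtain ⟨w⟩ := ‹Nonempty W›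
  calc (G.cartProd H).arcConn
      ≤ ((G.cartProd H).outArcs (S ×ˢ Set.univ)).card :=
        arcConn_le_card_outArcs ⟨(v, w), hv, trivial⟩ ⟨(v', w), fun h => hv' h.1⟩
    _ = (G.outArcs S).card * Fintype.card W := card_outArcs_cartProd_prod_univ G H S
    _ ≤ G.arcConn * Fintype.card W := Nat.mul_le_mul_right _ hcard

lemma arcConn_cartProd_le_mul_card_right [Nonempty V] [Nontrivial W] :
    (G.cartProd H).arcConn ≤ H.arcConn * Fintype.card V := by
  obtain ⟨T, ⟨w, hw⟩, ⟨w', hw'⟩, hcard⟩ := H.exists_card_outArcs_le_arcConn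
  obtain ⟨v⟩ := ‹Nonempty V›
  calc (G.cartProd H).arcConn
      ≤ ((G.cartProd H).outArcs (Set.univ ×ˢ T)).card :=
        arcConn_le_card_outArcs ⟨(v, w), trivial, hw⟩ ⟨(v, w'), fun h => hw' h.2⟩
    _ = (H.outArcs T).card * Fintype.card V := card_outArcs_cartProd_univ_prod G H T
    _ ≤ H.arcConn * Fintype.card V := Nat.mul_le_mul_right _ hcard

lemma arcConn_cartProd_le_minOutDeg_add [Nonempty V] [Nonempty W] [Nontrivial (V × W)] :
    (G.cartProd H).arcConn ≤ G.minOutDeg + H.minOutDeg := by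
  obtain ⟨a, ha⟩ := exists_eq_ciInf_of_finite (f := G.outDeg)
  obtain ⟨b, hb⟩ := exists_eq_ciInf_of_finite (f := H.outDeg)
  calc (G.cartProd H).arcConn
      ≤ ((G.cartProd H).outArcs {(a, b)}).card :=
        arcConn_le_card_outArcs (Set.singleton_nonempty _) (Set.nonempty_compl_of_nontrivial _)
    _ ≤ G.outDeg a + H.outDeg b := card_outArcs_cartProd_singleton_le G H a b
    _ = G.minOutDeg + H.minOutDeg := by rw [ha, hb]; rfl

lemma arcConn_cartProd_le_minInDeg_add [Nonempty V] [Nonempty W] [Nontrivial (V × W)] :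
    (G.cartProd H).arcConn ≤ G.minInDeg + H.minInDeg := by
  obtain ⟨a, ha⟩ := exists_eq_ciInf_of_finite (f := G.reverse.outDeg)
  obtain ⟨b, hb⟩ := exists_eq_ciInf_of_finite (f := H.reverse.outDeg)
  calc (G.cartProd H).arcConn
      ≤ ((G.cartProd H).outArcs {(a, b)}ᶜ).card :=
        arcConn_le_card_outArcs (Set.nonempty_compl_of_nontrivial _) (by simp)
    _ = ((G.reverse.cartProd H.reverse).outArcs {(a, b)}).card := by
        rw [← cartProd_reverse]; exact card_outArcs_reverse_compl (G.cartProd H).reverse {(a, b)}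
    _ ≤ G.reverse.outDeg a + H.reverse.outDeg b := card_outArcs_cartProd_singleton_le _ _ a b
    _ = G.minInDeg + H.minInDeg := by rw [ha, hb]; rfl

end CartProd

section LowerBound

variable [Fintype V] [Fintype W] {G : Digraph V} {H : Digraph W}

lemma minOutDeg_add_le_card_outArcs_cartProd (hGl : Irreflexive G.Adj)
    (hHl : Irreflexive H.Adj) (hG : G.IsStrong) (hH : H.IsStrong) {S : Set (V × W)}
    {v₁ : V} {w₁ : W} (h₁ : (v₁, w₁) ∈ S) {v₀ : V} {w₀ : W}
    (hrow : ∀ v, (v, w₀) ∉ S) (hcol : ∀ w, (v₀, w) ∉ S) :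
    G.minOutDeg + H.minOutDeg ≤ ((G.cartProd H).outArcs S).card := by
  have hrows := G.outDeg_add_ncard_le_sum hG hGl (fun w => (·, w) ⁻¹' S)
    (T := Prod.mk v₁ ⁻¹' S) h₁ (fun _ h => h) hcol
  have hcols := H.outDeg_add_ncard_le_sum hH hHl (fun v => Prod.mk v ⁻¹' S)
    (T := (·, w₁) ⁻¹' S) h₁ (fun _ h => h) hrow
  have hG₁ : G.minOutDeg ≤ G.outDeg v₁ := ciInf_le' _ v₁
  have hH₁ : H.minOutDeg ≤ H.outDeg w₁ := ciInf_le' _ w₁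
  rw [card_outArcs_cartProd]
  omega

lemma min_le_card_outArcs_cartProd (hGl : Irreflexive G.Adj) (hHl : Irreflexive H.Adj)
    (hG : G.IsStrong) (hH : H.IsStrong) {S : Set (V × W)} (hS : S.Nonempty)
    (hSc : Sᶜ.Nonempty) :
    min (G.arcConn * Fintype.card W)
        (min (H.arcConn * Fintype.card V)
          (min (G.minOutDeg + H.minOutDeg) (G.minInDeg + H.minInDeg))) ≤
      ((G.cartProd H).outArcs S).card := by
  by_cases hrows : ∀ w, ((·, w) ⁻¹' S).Nonempty ∧ ((·, w) ⁻¹' S)ᶜ.Nonempty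
  · have := G.arcConn_mul_card_le_sum _ hrows
    rw [card_outArcs_cartProd]
    omega
  by_cases hcols : ∀ v, (Prod.mk v ⁻¹' S).Nonempty ∧ (Prod.mk v ⁻¹' S)ᶜ.Nonempty
  · have := H.arcConn_mul_card_le_sum _ hcols
    rw [card_outArcs_cartProd]
    omega
  simp only [not_forall, not_and] at hrows hcols
  obtain ⟨w₂, hw₂⟩ := hrows
  obtain ⟨v₂, hv₂⟩ := hcols
  by_cases h₂ : (v₂, w₂) ∈ S
  · -- the row `w₂` and the column `v₂` lie in `S`, so they are empty in `Sᶜ`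
    obtain ⟨x, hx⟩ := hSc
    have := minOutDeg_add_le_card_outArcs_cartProd (G := G.reverse) (H := H.reverse) hGl hHl
      hG.reverse hH.reverse (S := Sᶜ) hx (w₀ := w₂) (v₀ := v₂)
      (fun v h => hw₂ ⟨v₂, h₂⟩ ⟨v, h⟩) (fun w h => hv₂ ⟨w₂, h₂⟩ ⟨w, h⟩)
    rw [← cartProd_reverse, card_outArcs_reverse_compl, minOutDeg_reverse,
      minOutDeg_reverse] at this
    omega
  · obtain ⟨x, hx⟩ := hS
    have := minOutDeg_add_le_card_outArcs_cartProd hGl hHl hG hH hx (w₀ := w₂) (v₀ := v₂)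
      (fun v h => hw₂ ⟨v, h⟩ ⟨v₂, h₂⟩) (fun w h => hv₂ ⟨w, h⟩ ⟨w₂, h₂⟩)
    omega

end LowerBound

end Digraph

theorem stmt0 {V W : Type*} [Fintype V] [Fintype W]
    (G : Digraph V) (H : Digraph W)
    (hGl : Irreflexive G.Adj) (hHl : Irreflexive H.Adj)
    (hG : G.IsStrong) (hH : H.IsStrong)
    (hV : 2 ≤ Fintype.card V) (hW : 2 ≤ Fintype.card W) :
    (G.cartProd H).arcConn =
      min (G.arcConn * Fintype.card W)
        (min (H.arcConn * Fintype.card V)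
          (min (G.minOutDeg + H.minOutDeg) (G.minInDeg + H.minInDeg))) := by
  have := Fintype.one_lt_card_iff_nontrivial.1 hV
  have := Fintype.one_lt_card_iff_nontrivial.1 hW
  refine le_antisymm ?_ (Digraph.le_arcConn fun S hS hSc =>
    Digraph.min_le_card_outArcs_cartProd hGl hHl hG hH hS hSc)
  exact le_min (Digraph.arcConn_cartProd_le_mul_card_left G H) <|
    le_min (Digraph.arcConn_cartProd_le_mul_card_right G H) <|
      le_min (Digraph.arcConn_cartProd_le_minOutDeg_add G H)
        (Digraph.arcConn_cartProd_le_minInDeg_add G H)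
end

section
/- For any digraph D of order n and any integer k with 2 ≤ k ≤ n, the strong subgraph k-arc-connectivity satisfies λ_k(D) ≤ min{δ⁺(D), δ⁻(D)}. -/
/-! Each of `λ_S(D)` arc-disjoint `S`-strong subgraphs must leave (and enter) every vertex `v`
of `S`, since `S` contains a second vertex that `v` has to reach (and be reached from). These
arcs are distinct, so `λ_S(D) ≤ min (d⁺ v) (d⁻ v)`. Taking `S` of size `k` to contain a vertex
of minimum out-degree and one of minimum in-degree gives the bound on `λ_k(D)`. -/

open Function in
theorem Set.card_le_ncard_of_pairwise_disjoint_of_inter_nonempty {α ι : Type*} [Fintype ι]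
    {f : ι → Set α} {T : Set α} (hT : T.Finite) (hdisj : Pairwise (Disjoint on f))
    (hmeet : ∀ i, (f i ∩ T).Nonempty) : Fintype.card ι ≤ T.ncard := by
  choose g hg using hmeet
  have hinj : Function.Injective fun i => (⟨g i, (hg i).2⟩ : T) := by
    intro i j hij
    rw [Subtype.mk.injEq] at hij
    by_contra hne
    exact Set.disjoint_left.mp (hdisj hne) (hg i).1 (hij ▸ (hg j).1)
  have := hT.to_subtype
  simpa [Nat.card_coe_set_eq] using Nat.card_le_card_of_injective _ hinj

namespace Digraph

variable {V : Type*} {D : Digraph V} {S : Set V} {B : Set (V × V)} {u v : V}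

theorem IsStrongSubgraphOn.exists_arc_out (hB : D.IsStrongSubgraphOn S B)
    (hv : v ∈ S) (hu : u ∈ S) (hne : u ≠ v) : ∃ w, (v, w) ∈ B ∧ D.Adj v w := by
  rcases (hB.2 v (Or.inl hv) u (Or.inl hu)).cases_head with h | ⟨w, hw, -⟩
  · exact absurd h.symm hne
  · exact ⟨w, hw, hB.1 hw⟩

theorem IsStrongSubgraphOn.exists_arc_in (hB : D.IsStrongSubgraphOn S B)
    (hv : v ∈ S) (hu : u ∈ S) (hne : u ≠ v) : ∃ w, (w, v) ∈ B ∧ D.Adj w v := by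
  rcases (hB.2 u (Or.inl hu) v (Or.inl hv)).cases_tail with h | ⟨w, -, hw⟩
  · exact absurd h.symm hne
  · exact ⟨w, hw, hB.1 hw⟩

variable [Finite V]

theorem lambdaS_le_outDeg (hS : 1 < S.ncard) (hv : v ∈ S) : D.lambdaS S ≤ D.outDeg v := by
  obtain ⟨u, hu, hne⟩ := Set.exists_ne_of_one_lt_ncard hS v
  refine csSup_le' ?_
  rintro m ⟨f, hf, hdisj⟩
  have h := Set.card_le_ncard_of_pairwise_disjoint_of_inter_nonempty
    (f := fun i => (v, ·) ⁻¹' f i) (T := {w | D.Adj v w})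
    (Set.toFinite _) (fun i j hij => (hdisj i j hij).preimage _)
    (fun i => (hf i).exists_arc_out hv hu hne)
  rwa [Fintype.card_fin] at h

theorem lambdaS_le_inDeg (hS : 1 < S.ncard) (hv : v ∈ S) : D.lambdaS S ≤ D.inDeg v := by
  obtain ⟨u, hu, hne⟩ := Set.exists_ne_of_one_lt_ncard hS v
  refine csSup_le' ?_
  rintro m ⟨f, hf, hdisj⟩
  have h := Set.card_le_ncard_of_pairwise_disjoint_of_inter_nonempty
    (f := fun i => (·, v) ⁻¹' f i) (T := {w | D.Adj w v})
    (Set.toFinite _) (fun i j hij => (hdisj i j hij).preimage _)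
    (fun i => (hf i).exists_arc_in hv hu hne)
  rwa [Fintype.card_fin] at h

end Digraph

theorem stmt6 {V : Type*} [Fintype V] (D : Digraph V) (k : ℕ)
    (hk2 : 2 ≤ k) (hkn : k ≤ Fintype.card V) :
    D.lambdaK k ≤ min D.minOutDeg D.minInDeg := by
  have : Nonempty V := Fintype.card_pos_iff.mp (by omega)
  obtain ⟨a, ha⟩ : ∃ a, D.outDeg a = D.minOutDeg := exists_eq_ciInf_of_finite
  obtain ⟨b, hb⟩ : ∃ b, D.inDeg b = D.minInDeg := exists_eq_ciInf_of_finite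
  obtain ⟨S, hab, -, hS⟩ := Set.exists_subsuperset_card_eq (Set.subset_univ {a, b})
    ((Set.ncard_insert_le _ _).trans (by simp only [Set.ncard_singleton]; omega)) (by simpa using hkn)
  have hlam : D.lambdaK k ≤ D.lambdaS S := Nat.sInf_le ⟨S, hS, rfl⟩
  have hS1 : 1 < S.ncard := by omega
  refine le_min (hlam.trans ?_) (hlam.trans ?_)
  · exact ha ▸ D.lambdaS_le_outDeg hS1 (hab (by simp))
  · exact hb ▸ D.lambdaS_le_inDeg hS1 (hab (by simp))
end

section
/- For any strong digraph D of order n and integer k with 2 ≤ k ≤ n, λ_k(D) ≤ λ(D), i.e., the strong subgraph k-arc-connectivity is at most the arc-strong connectivity. -/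
/-
A minimum arc cut `F` of `D` leaves some `u` unable to reach some `v`. Take a `k`-set `S`
containing `u` and `v`: every `S`-strong subgraph contains a `u`–`v` path, hence an arc of `F`,
so arc-disjoint `S`-strong subgraphs pick distinct arcs of `F` and there are at most `|F|` of them.
-/

theorem Set.le_ncard_of_pairwiseDisjoint_inter_nonempty {α : Type*} {m : ℕ}
    {F : Set α} (hF : F.Finite) (f : Fin m → Set α)
    (hdisj : ∀ i j, i ≠ j → Disjoint (f i) (f j)) (hmeet : ∀ i, (f i ∩ F).Nonempty) :
    m ≤ F.ncard := by
  choose e he using hmeet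
  have : Finite F := hF
  have hinj : Function.Injective fun i => (⟨e i, (he i).2⟩ : F) := by
    intro i j hij
    by_contra hne
    have hij' : e i = e j := congrArg Subtype.val hij
    exact Set.disjoint_left.mp (hdisj i j hne) (he i).1 (hij' ▸ (he j).1)
  simpa [Nat.card_coe_set_eq] using Nat.card_le_card_of_injective _ hinj

namespace Digraph

variable {V : Type*} {D : Digraph V}

theorem not_isStrong_deleteArcs_arcSet [Nontrivial V] (D : Digraph V) :
    ¬ (D.DeleteArcs D.ArcSet).IsStrong := by
  intro h
  obtain ⟨a, b, hab⟩ := exists_pair_ne V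
  cases (h a b).cases_head with
  | inl h => exact hab h
  | inr h => obtain ⟨c, hac, -⟩ := h; exact hac.2 hac.1

theorem exists_arcCut_ncard_eq_arcConn [Nontrivial V] (D : Digraph V) :
    ∃ F ⊆ D.ArcSet, F.ncard = D.arcConn ∧ ¬ (D.DeleteArcs F).IsStrong :=
  Nat.sInf_mem (s := {k | ∃ F ⊆ D.ArcSet, F.ncard = k ∧ ¬ (D.DeleteArcs F).IsStrong})
    ⟨_, D.ArcSet, subset_rfl, rfl, D.not_isStrong_deleteArcs_arcSet⟩

theorem IsStrongSubgraphOn.inter_nonempty_of_not_reachable {S : Set V} {B F : Set (V × V)}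
    (hB : D.IsStrongSubgraphOn S B) {u v : V} (hu : u ∈ S) (hv : v ∈ S)
    (huv : ¬ Relation.ReflTransGen (D.DeleteArcs F).Adj u v) : (B ∩ F).Nonempty := by
  by_contra hBF
  refine huv (Relation.ReflTransGen.mono (fun a b hab => ?_) _ _ (hB.2 u (.inl hu) v (.inl hv)))
  exact ⟨hB.1 hab, fun habF => hBF ⟨(a, b), hab, habF⟩⟩

theorem lambdaS_le_ncard_of_not_reachable [Finite V] {S : Set V} {F : Set (V × V)} {u v : V}
    (hu : u ∈ S) (hv : v ∈ S) (huv : ¬ Relation.ReflTransGen (D.DeleteArcs F).Adj u v) :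
    D.lambdaS S ≤ F.ncard := by
  refine csSup_le ⟨0, Fin.elim0, fun i => i.elim0, fun i => i.elim0⟩ ?_
  rintro m ⟨f, hf, hdisj⟩
  exact Set.le_ncard_of_pairwiseDisjoint_inter_nonempty F.toFinite f hdisj
    fun i => (hf i).inter_nonempty_of_not_reachable hu hv huv

theorem lambdaK_le_lambdaS {k : ℕ} {S : Set V} (hS : S.ncard = k) : D.lambdaK k ≤ D.lambdaS S :=
  Nat.sInf_le ⟨S, hS, rfl⟩

end Digraph

theorem stmt7_general {V : Type*} [Fintype V] (D : Digraph V) (k : ℕ)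
    (hk2 : 2 ≤ k) (hkn : k ≤ Fintype.card V) :
    D.lambdaK k ≤ D.arcConn := by
  classical
  have : Nontrivial V := Fintype.one_lt_card_iff_nontrivial.mp (by omega)
  obtain ⟨F, -, hF, hFcut⟩ := D.exists_arcCut_ncard_eq_arcConn
  obtain ⟨u, v, huv⟩ : ∃ u v, ¬ Relation.ReflTransGen (D.DeleteArcs F).Adj u v := by
    simpa [Digraph.IsStrong] using hFcut
  obtain ⟨S, huvS, hS⟩ := Finset.exists_superset_card_eq (s := {u, v})
    (Finset.card_le_two.trans hk2) hkn
  calc D.lambdaK k ≤ D.lambdaS S := Digraph.lambdaK_le_lambdaS (by simpa using hS)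
    _ ≤ F.ncard := Digraph.lambdaS_le_ncard_of_not_reachable
        (huvS (by simp)) (huvS (by simp)) huv
    _ = D.arcConn := hF

theorem stmt7 {V : Type*} [Fintype V] (D : Digraph V) (hD : D.IsStrong) (k : ℕ)
    (hk2 : 2 ≤ k) (hkn : k ≤ Fintype.card V) :
    D.lambdaK k ≤ D.arcConn :=
  stmt7_general D k hk2 hkn
end

section
/- For any undirected graph G, the strong subgraph 2-arc-connectivity of the complete biorientation of G equals the edge-connectivity of G: λ_2(↔G) = λ(G). -/
/-!
Fix a pair `u ≠ v`. If deleting an edge set `F` separates `u` from `v`, every strong subgraph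
containing `u` and `v` has an arc leaving the component `A` of `u` in `G - F`; its edge lies in
`F`, and the arc is determined by that edge since it points out of `A`. Arc-disjoint subgraphs
therefore give distinct edges of `F`, so `λ_{u,v}(↔G) ≤ |F|`.

Conversely, if fewer than `c` deleted edges never separate `u` from `v`, augmenting paths
(Ford–Fulkerson with unit capacities) build a `u`-`v` flow of value `c`, and peeling off
saturated paths splits it into `c` edge-disjoint `u`-`v` paths. The biorientation of each path is
a strong subgraph containing `u` and `v`, so `λ_{u,v}(↔G) ≥ c`. Minimising over pairs gives the
theorem.
-/

lemma Relation.ReflTransGen.exists_rel_of_mem_of_notMem {α : Type*} {r : α → α → Prop}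
    {s : Set α} {a b : α} (h : Relation.ReflTransGen r a b) (ha : a ∈ s) (hb : b ∉ s) :
    ∃ x y, r x y ∧ x ∈ s ∧ y ∉ s := by
  induction h with
  | refl => exact absurd ha hb
  | @tail c d _ hcd ih =>
    by_cases hc : c ∈ s
    · exact ⟨c, d, hcd, hc, hb⟩
    · exact ih hc

namespace SimpleGraph

variable {V : Type*} {G : SimpleGraph V} {u v : V}

namespace Walk

variable {w x y : V}

def arcs (p : G.Walk u v) : List (V × V) := p.darts.map (·.toProd)

@[simp] lemma arcs_nil : (nil : G.Walk u u).arcs = [] := rfl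

@[simp] lemma arcs_cons (h : G.Adj u w) (p : G.Walk w v) :
    (cons h p).arcs = (u, w) :: p.arcs := rfl

lemma adj_of_mem_arcs {p : G.Walk u v} (h : (x, y) ∈ p.arcs) : G.Adj x y := by
  obtain ⟨⟨_, hd⟩, -, rfl⟩ := List.mem_map.1 h
  exact hd

lemma map_mk_arcs (p : G.Walk u v) : p.arcs.map (fun a => s(a.1, a.2)) = p.edges := by
  simp [arcs, edges, Function.comp_def, Dart.edge]

lemma mem_edges_iff_mem_arcs {p : G.Walk u v} :
    s(x, y) ∈ p.edges ↔ (x, y) ∈ p.arcs ∨ (y, x) ∈ p.arcs := by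
  rw [← map_mk_arcs]
  simp [and_comm]

lemma reflTransGen_of_mem_support {E : Set (Sym2 V)} (p : G.Walk u v)
    (hE : ∀ e ∈ p.edges, e ∈ E) (hx : x ∈ p.support) :
    Relation.ReflTransGen (fun a b => s(a, b) ∈ E) u x := by
  induction p with
  | nil => exact (List.mem_singleton.1 hx) ▸ .refl
  | cons h p ih =>
    rcases List.mem_cons.1 hx with rfl | hx
    · exact .refl
    · exact .head (hE _ (by simp)) (ih (fun e he => hE e (by simp [he])) hx)

lemma exists_isPath_of_reflTransGen [DecidableEq V] {r : V → V → Prop}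
    (hr : ∀ a b, r a b → G.Adj a b) (h : Relation.ReflTransGen r u v) :
    ∃ p : G.Walk u v, p.IsPath ∧ ∀ a ∈ p.arcs, r a.1 a.2 := by
  suffices ∃ p : G.Walk u v, ∀ a ∈ p.arcs, r a.1 a.2 by
    obtain ⟨p, hp⟩ := this
    refine ⟨p.bypass, p.bypass_isPath, fun a ha => hp a ?_⟩
    obtain ⟨d, hd, rfl⟩ := List.mem_map.1 ha
    exact List.mem_map_of_mem (p.darts_bypass_subset_darts hd)
  induction h using Relation.ReflTransGen.head_induction_on with
  | refl => exact ⟨nil, by simp⟩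
  | head hac _ ih =>
    obtain ⟨p, hp⟩ := ih
    exact ⟨cons (hr _ _ hac) p, by simpa [hac] using hp⟩

variable [DecidableEq V]

def flow (p : G.Walk u v) (x y : V) : ℤ := (p.arcs.count (x, y) : ℤ) - p.arcs.count (y, x)

lemma flow_swap (p : G.Walk u v) (x y : V) : p.flow y x = -p.flow x y := by
  simp [flow]

lemma flow_eq_zero {p : G.Walk u v} (h : s(x, y) ∉ p.edges) : p.flow x y = 0 := by
  rw [mem_edges_iff_mem_arcs, not_or] at h
  simp [flow, List.count_eq_zero_of_not_mem h.1, List.count_eq_zero_of_not_mem h.2]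

lemma IsTrail.flow_eq_one {p : G.Walk u v} (hp : p.IsTrail) (h : (x, y) ∈ p.arcs) :
    p.flow x y = 1 := by
  have hnd : (p.arcs.map fun a => s(a.1, a.2)).Nodup := p.map_mk_arcs ▸ hp.edges_nodup
  have hyx : (y, x) ∉ p.arcs := fun hyx =>
    (adj_of_mem_arcs h).ne (Prod.ext_iff.1 (List.inj_on_of_nodup_map hnd h hyx Sym2.eq_swap)).1
  simp [flow, List.count_eq_one_of_mem hnd.of_map h, List.count_eq_zero_of_not_mem hyx]

lemma flow_cons (h : G.Adj u w) (p : G.Walk w v) (x y : V) :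
    (cons h p).flow x y =
      p.flow x y + ((if (u, w) = (x, y) then 1 else 0) - if (u, w) = (y, x) then 1 else 0) := by
  simp only [flow, arcs_cons, List.count_cons, beq_iff_eq]
  push_cast
  ring

lemma sum_flow [Fintype V] (p : G.Walk u v) (x : V) :
    ∑ y, p.flow x y = (if x = u then 1 else 0) - if x = v then 1 else 0 := by
  induction p with
  | nil => simp [flow]
  | cons h p ih =>
    simp only [flow_cons, Finset.sum_add_distrib, Finset.sum_sub_distrib, ih]
    simp [ite_and, eq_comm]

end Walk

section Flow

variable [Fintype V] {f : V → V → ℤ} {k : ℤ}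

/-- A `u`-`v` flow of value `k` with unit capacities on the edges of `G`, encoded by its
skew-symmetric net flow `f x y` along each ordered pair. -/
structure IsUnitFlow (G : SimpleGraph V) (u v : V) (f : V → V → ℤ) (k : ℤ) : Prop where
  swap : ∀ x y, f y x = -f x y
  adj : ∀ x y, f x y ≠ 0 → G.Adj x y
  le_one : ∀ x y, f x y ≤ 1
  sum_eq_zero : ∀ x, x ≠ u → x ≠ v → ∑ y, f x y = 0
  sum_eq : ∑ y, f u y = k

lemma IsUnitFlow.neg_one_le (hf : G.IsUnitFlow u v f k) (x y : V) : -1 ≤ f x y := by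
  linarith [hf.swap x y, hf.le_one y x]

variable [DecidableEq V]

lemma sum_sum_compl_eq_of_swap (hf : ∀ x y, f y x = -f x y) (A : Finset V) :
    ∑ x ∈ A, ∑ y ∈ Aᶜ, f x y = ∑ x ∈ A, ∑ y, f x y := by
  have hA : ∑ x ∈ A, ∑ y ∈ A, f x y = 0 := by
    have hcomm := Finset.sum_comm (s := A) (t := A) (f := f)
    have hneg : ∑ y ∈ A, ∑ x ∈ A, f x y = -∑ y ∈ A, ∑ x ∈ A, f y x := by
      simp [← Finset.sum_neg_distrib, ← hf]
    linarith
  simp only [← Finset.sum_add_sum_compl A (f _), Finset.sum_add_distrib, hA, zero_add]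

namespace IsUnitFlow

lemma sum_sum_compl_eq (hf : G.IsUnitFlow u v f k) {A : Finset V} (hu : u ∈ A) (hv : v ∉ A) :
    ∑ x ∈ A, ∑ y ∈ Aᶜ, f x y = k := by
  rw [sum_sum_compl_eq_of_swap hf.swap, Finset.sum_eq_single_of_mem u hu
    fun x hx hxu => hf.sum_eq_zero x hxu (ne_of_mem_of_not_mem hx hv), hf.sum_eq]

lemma add_flow (hf : G.IsUnitFlow u v f k) (huv : u ≠ v) {p : G.Walk u v} (hp : p.IsTrail)
    (ε : ℤ) (hcap : ∀ a ∈ p.arcs, |f a.1 a.2 + ε| ≤ 1) :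
    G.IsUnitFlow u v (fun x y => f x y + ε * p.flow x y) (k + ε) where
  swap x y := by rw [hf.swap, p.flow_swap]; ring
  adj x y h := by
    by_cases hxy : f x y = 0
    · by_contra hn
      exact h (by rw [hxy, p.flow_eq_zero fun he => hn (p.adj_of_mem_edges he)]; ring)
    · exact hf.adj x y hxy
  le_one x y := by
    by_cases hxy : (x, y) ∈ p.arcs
    · rw [hp.flow_eq_one hxy, mul_one]
      exact (abs_le.1 (hcap _ hxy)).2
    by_cases hyx : (y, x) ∈ p.arcs
    · rw [p.flow_swap, hp.flow_eq_one hyx, hf.swap y x]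
      linarith [(abs_le.1 (hcap _ hyx)).1]
    · rw [p.flow_eq_zero (by simp [Walk.mem_edges_iff_mem_arcs, hxy, hyx]), mul_zero, add_zero]
      exact hf.le_one x y
  sum_eq_zero x hxu hxv := by
    simp [Finset.sum_add_distrib, ← Finset.mul_sum, p.sum_flow, hxu, hxv,
      hf.sum_eq_zero x hxu hxv]
  sum_eq := by
    simp [Finset.sum_add_distrib, ← Finset.mul_sum, p.sum_flow, huv, hf.sum_eq]

lemma exists_add_one (hf : G.IsUnitFlow u v f k) (huv : u ≠ v) {c : ℕ} (hk : k < c)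
    (hc : G.IsEdgeReachable c u v) : ∃ g, G.IsUnitFlow u v g (k + 1) := by
  classical
  let residual x y := G.Adj x y ∧ f x y < 1
  by_cases hres : Relation.ReflTransGen residual u v
  · obtain ⟨p, hp, hpres⟩ := Walk.exists_isPath_of_reflTransGen (fun _ _ h => h.1) hres
    refine ⟨_, hf.add_flow huv hp.isTrail 1 fun a ha => abs_le.2 ⟨?_, ?_⟩⟩
    · linarith [hf.neg_one_le a.1 a.2]
    · linarith [(hpres a ha).2]
  exfalso
  -- The edges leaving the residual component `A` of `u` are saturated, hence form a cut of
  -- size `k < c`.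
  let A := Finset.univ.filter (Relation.ReflTransGen residual u)
  have hu : u ∈ A := Finset.mem_filter.2 ⟨Finset.mem_univ u, .refl⟩
  have hv : v ∉ A := by simpa [A] using hres
  have hcross : ∀ x ∈ A, ∀ y ∈ Aᶜ, f x y = if G.Adj x y then 1 else 0 := by
    intro x hx y hy
    simp only [A, Finset.mem_compl, Finset.mem_filter, Finset.mem_univ, true_and] at hx hy
    split_ifs with hxy
    · by_contra hne
      exact hy (hx.tail ⟨hxy, lt_of_le_of_ne (hf.le_one x y) hne⟩)
    · by_contra hne
      exact hxy (hf.adj x y hne)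
  let cut := (A ×ˢ Aᶜ).filter fun a => G.Adj a.1 a.2
  have hcard : (cut.card : ℤ) = k := by
    rw [← hf.sum_sum_compl_eq hu hv, Finset.card_filter,
      Finset.sum_product]
    push_cast
    exact Finset.sum_congr rfl fun x hx => Finset.sum_congr rfl fun y hy => (hcross x hx y hy).symm
  let E : Finset (Sym2 V) := cut.image fun a => s(a.1, a.2)
  have hE : (E : Set (Sym2 V)).encard < c := by
    have : (E.card : ℤ) ≤ cut.card := by exact_mod_cast Finset.card_image_le
    rw [Set.encard_coe_eq_coe_finsetCard]
    exact_mod_cast (show (E.card : ℤ) < c by omega)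
  obtain ⟨x, y, hxy, hx, hy⟩ :=
    ((reachable_iff_reflTransGen u v).1 (hc hE)).exists_rel_of_mem_of_notMem (s := A) hu hv
  rw [deleteEdges_adj] at hxy
  have hcut : (x, y) ∈ cut :=
    Finset.mem_filter.2 ⟨Finset.mem_product.2 ⟨hx, Finset.mem_compl.2 hy⟩, hxy.1⟩
  exact hxy.2 (Finset.mem_image_of_mem _ hcut)

lemma exists_isPath_saturated (hf : G.IsUnitFlow u v f k) (hk : 0 < k) :
    ∃ p : G.Walk u v, p.IsPath ∧ ∀ a ∈ p.arcs, f a.1 a.2 = 1 := by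
  classical
  let saturated x y := f x y = 1
  by_cases hsat : Relation.ReflTransGen saturated u v
  · exact Walk.exists_isPath_of_reflTransGen
      (fun x y h => hf.adj x y (by simp [saturated, h])) hsat
  exfalso
  let A := Finset.univ.filter (Relation.ReflTransGen saturated u)
  have hu : u ∈ A := Finset.mem_filter.2 ⟨Finset.mem_univ u, .refl⟩
  have hv : v ∉ A := by simpa [A] using hsat
  have hcross : ∀ x ∈ A, ∀ y ∈ Aᶜ, f x y ≤ 0 := by
    intro x hx y hy
    simp only [A, Finset.mem_compl, Finset.mem_filter, Finset.mem_univ, true_and] at hx hy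
    have := hf.le_one x y
    have : f x y ≠ 1 := fun h => hy (hx.tail h)
    omega
  have := hf.sum_sum_compl_eq hu hv
  linarith [Finset.sum_nonpos fun x hx => Finset.sum_nonpos (hcross x hx)]

lemma exists_edgeDisjoint_walks {n : ℕ} (hf : G.IsUnitFlow u v f n) (huv : u ≠ v) :
    ∃ p : Fin n → G.Walk u v, (∀ i x y, s(x, y) ∈ (p i).edges → f x y ≠ 0) ∧
      ∀ i j, i ≠ j → (p i).edges.Disjoint (p j).edges := by
  induction n generalizing f with
  | zero => exact ⟨finZeroElim, finZeroElim, finZeroElim⟩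
  | succ n ih =>
    obtain ⟨p, hp, hsat⟩ := hf.exists_isPath_saturated (by positivity)
    have hon : ∀ x y, s(x, y) ∈ p.edges → f x y = p.flow x y ∧ f x y ≠ 0 := by
      intro x y he
      rcases Walk.mem_edges_iff_mem_arcs.1 he with h | h
      · rw [hp.isTrail.flow_eq_one h, hsat _ h]
        simp
      · rw [hf.swap y x, p.flow_swap y x, hp.isTrail.flow_eq_one h, hsat _ h]
        simp
    have hg : G.IsUnitFlow u v (fun x y => f x y + -1 * p.flow x y) n := by
      convert hf.add_flow huv hp.isTrail (-1) (fun a ha => by simp [hsat a ha]) using 1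
      push_cast
      ring
    obtain ⟨q, hq, hqdisj⟩ := ih hg
    have hqp : ∀ j, p.edges.Disjoint (q j).edges := by
      intro j e hep heq
      induction e using Sym2.ind with
      | _ x y => exact hq j x y heq (by rw [(hon x y hep).1]; ring)
    refine ⟨Fin.cons p q, fun i => ?_, fun i j hij => ?_⟩
    · induction i using Fin.cases with
      | zero => exact fun x y he => (hon x y he).2
      | succ j =>
        intro x y he hfxy
        have hnp : s(x, y) ∉ p.edges := fun hep => (hon x y hep).2 hfxy
        exact hq j x y he (by rw [hfxy, Walk.flow_eq_zero hnp]; ring)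
    · induction i using Fin.cases <;> induction j using Fin.cases
      · exact absurd rfl hij
      · exact hqp _
      · exact (hqp _).symm
      · exact hqdisj _ _ fun h => hij (congrArg Fin.succ h)

end IsUnitFlow

lemma exists_isUnitFlow (huv : u ≠ v) {c : ℕ} (hc : G.IsEdgeReachable c u v) :
    ∃ f, G.IsUnitFlow u v f c := by
  suffices ∀ n ≤ c, ∃ f, G.IsUnitFlow u v f n from this c le_rfl
  intro n hn
  induction n with
  | zero => exact ⟨0, fun _ _ => by simp, fun _ _ h => absurd rfl h, fun _ _ => by simp,
      fun _ _ _ => by simp, by simp⟩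
  | succ n ih =>
    obtain ⟨f, hf⟩ := ih (by omega)
    simpa using hf.exists_add_one huv (by omega) hc

end Flow

def Walk.biorientArcs (p : G.Walk u v) : Set (V × V) := {a | s(a.1, a.2) ∈ p.edges}

lemma Walk.isStrongSubgraphOn_biorientArcs (p : G.Walk u v) :
    G.biorient.IsStrongSubgraphOn {u, v} p.biorientArcs := by
  let R : V → V → Prop := fun a b => (a, b) ∈ p.biorientArcs
  have : Std.Symm R := ⟨fun a b h => by simpa [R, biorientArcs, Sym2.eq_swap] using h⟩
  have hreach : ∀ x ∈ p.support, Relation.ReflTransGen R u x :=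
    fun x hx => p.reflTransGen_of_mem_support (fun _ he => he) hx
  have hsupp : ∀ x ∈ ({u, v} : Set V) ∪ {x | ∃ a ∈ p.biorientArcs, x = a.1 ∨ x = a.2},
      x ∈ p.support := by
    rintro x ((rfl | rfl) | ⟨a, ha, rfl | rfl⟩)
    · exact p.start_mem_support
    · exact p.end_mem_support
    · exact p.fst_mem_support_of_mem_edges ha
    · exact p.snd_mem_support_of_mem_edges ha
  refine ⟨fun a ha => p.adj_of_mem_edges ha, fun x hx y hy => ?_⟩
  exact (Std.Symm.symm _ _ (hreach x (hsupp x hx))).trans (hreach y (hsupp y hy))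

lemma card_le_ncard_of_isStrongSubgraphOn [Finite V] {F : Set (Sym2 V)}
    (hF : ¬(G.deleteEdges F).Reachable u v) {k : ℕ} {B : Fin k → Set (V × V)}
    (hB : ∀ i, G.biorient.IsStrongSubgraphOn {u, v} (B i))
    (hdisj : ∀ i j, i ≠ j → Disjoint (B i) (B j)) : k ≤ F.ncard := by
  let A := {x | (G.deleteEdges F).Reachable u x}
  have hcross : ∀ i, ∃ a ∈ B i, a.1 ∈ A ∧ a.2 ∉ A := fun i => by
    obtain ⟨x, y, hxy, hx, hy⟩ := ((hB i).2 u (by simp) v (by simp)).exists_rel_of_mem_of_notMem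
      (s := A) (Reachable.refl u) hF
    exact ⟨(x, y), hxy, hx, hy⟩
  choose a haB hacross using hcross
  have hmem : ∀ i, s((a i).1, (a i).2) ∈ F := fun i => by
    by_contra h
    have hadj : (G.deleteEdges F).Adj (a i).1 (a i).2 := deleteEdges_adj.2 ⟨(hB i).1 (haB i), h⟩
    exact (hacross i).2 ((hacross i).1.trans hadj.reachable)
  have hinj : Function.Injective fun i => s((a i).1, (a i).2) := by
    intro i j hij
    by_contra hne
    have : a i = a j := by
      rcases Sym2.eq_iff.1 hij with h | h
      · exact Prod.ext h.1 h.2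
      · exact absurd (h.1 ▸ (hacross i).1) (hacross j).2
    exact Set.disjoint_left.1 (hdisj i j hne) (haB i) (this ▸ haB j)
  simpa using Set.ncard_le_ncard_of_injOn (s := Set.univ) _ (fun i _ => hmem i) hinj.injOn

lemma lambdaS_biorient_le_ncard [Finite V] {F : Set (Sym2 V)}
    (hF : ¬(G.deleteEdges F).Reachable u v) : G.biorient.lambdaS {u, v} ≤ F.ncard :=
  csSup_le ⟨0, finZeroElim, finZeroElim, finZeroElim⟩ fun _ ⟨_, hB, hdisj⟩ =>
    card_le_ncard_of_isStrongSubgraphOn hF hB hdisj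

lemma le_lambdaS_biorient [Fintype V] (huv : u ≠ v) {c : ℕ} (hc : G.IsEdgeReachable c u v) :
    c ≤ G.biorient.lambdaS {u, v} := by
  classical
  obtain ⟨f, hf⟩ := exists_isUnitFlow huv hc
  obtain ⟨p, -, hdisj⟩ := hf.exists_edgeDisjoint_walks huv
  refine le_csSup ⟨G.edgeSet.ncard, fun _ ⟨_, hB, hd⟩ =>
    card_le_ncard_of_isStrongSubgraphOn (by simp [huv]) hB hd⟩
    ⟨fun i => (p i).biorientArcs, fun i => (p i).isStrongSubgraphOn_biorientArcs,
      fun i j hij => Set.disjoint_left.2 fun _ ha hb => hdisj i j hij ha hb⟩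

lemma isEdgeReachable_edgeConn [Finite V] (G : SimpleGraph V) (u v : V) :
    G.IsEdgeReachable G.edgeConn u v := by
  intro s hs
  by_contra h
  have hmem : (s ∩ G.edgeSet).ncard ∈
      {k | ∃ F ⊆ G.edgeSet, F.ncard = k ∧ ¬(G.deleteEdges F).Connected} :=
    ⟨_, Set.inter_subset_right, rfl, fun hconn => h (by
      simpa [← deleteEdges_eq_inter_edgeSet] using hconn.preconnected u v)⟩
  have hle : G.edgeConn ≤ s.ncard := (Nat.sInf_le hmem).trans
    (Set.ncard_le_ncard Set.inter_subset_left s.toFinite)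
  rw [← s.toFinite.cast_ncard_eq] at hs
  exact absurd hle (by exact_mod_cast hs.not_ge)

lemma exists_ncard_eq_edgeConn_not_reachable [Finite V] [Nontrivial V] (G : SimpleGraph V) :
    ∃ F : Set (Sym2 V), F.ncard = G.edgeConn ∧ ∃ u v, ¬(G.deleteEdges F).Reachable u v := by
  obtain ⟨x, y, hxy⟩ := exists_pair_ne V
  have hne : {k | ∃ F ⊆ G.edgeSet, F.ncard = k ∧ ¬(G.deleteEdges F).Connected}.Nonempty :=
    ⟨_, G.edgeSet, subset_rfl, rfl, fun h => hxy (by simpa using h.preconnected x y)⟩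
  obtain ⟨F, -, hF, hconn⟩ := Nat.sInf_mem hne
  refine ⟨F, hF, ?_⟩
  by_contra! h
  exact hconn ⟨h⟩

lemma edgeConn_eq_zero_of_subsingleton [Subsingleton V] (G : SimpleGraph V) : G.edgeConn = 0 := by
  rw [edgeConn, Nat.sInf_eq_zero]
  rcases isEmpty_or_nonempty V with hV | hV
  · exact .inl ⟨∅, Set.empty_subset _, Set.ncard_empty _, fun h => hV.elim h.nonempty.some⟩
  · exact .inr (Set.eq_empty_of_forall_notMem fun _ ⟨_, _, _, h⟩ => h .of_subsingleton)

end SimpleGraph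

lemma Digraph.lambdaK_two_eq_zero_of_subsingleton {V : Type*} [Subsingleton V] (D : Digraph V) :
    D.lambdaK 2 = 0 := by
  rw [lambdaK, Nat.sInf_eq_zero]
  refine .inr (Set.eq_empty_of_forall_notMem fun _ ⟨S, hS, _⟩ => ?_)
  obtain ⟨x, y, hxy, -⟩ := Set.ncard_eq_two.1 hS
  exact hxy (Subsingleton.elim x y)

theorem stmt8 {V : Type*} [Fintype V] (G : SimpleGraph V) :
    G.biorient.lambdaK 2 = G.edgeConn := by
  rcases subsingleton_or_nontrivial V with hV | hV
  · rw [Digraph.lambdaK_two_eq_zero_of_subsingleton, G.edgeConn_eq_zero_of_subsingleton]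
  obtain ⟨F, hF, u, v, huv⟩ := G.exists_ncard_eq_edgeConn_not_reachable
  refine le_antisymm ?_ ?_
  · calc G.biorient.lambdaK 2
        ≤ G.biorient.lambdaS {u, v} :=
          Nat.sInf_le ⟨_, Set.ncard_pair (by rintro rfl; exact huv .rfl), rfl⟩
      _ ≤ F.ncard := SimpleGraph.lambdaS_biorient_le_ncard huv
      _ = G.edgeConn := hF
  · obtain ⟨x, y, hxy⟩ := exists_pair_ne V
    refine le_csInf ⟨_, {x, y}, Set.ncard_pair hxy, rfl⟩ ?_
    rintro _ ⟨S, hS, rfl⟩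
    obtain ⟨a, b, hab, rfl⟩ := Set.ncard_eq_two.1 hS
    exact SimpleGraph.le_lambdaS_biorient hab (G.isEdgeReachable_edgeConn a b)
end

section
/- For strong digraphs G and H, if x and y are two vertices of G □ H lying in a common copy of G or a common copy of H (i.e., they agree in one coordinate), then λ_{x,y}(G □ H) ≥ λ_2(G) + λ_2(H), where λ_{x,y} is the maximum number of pairwise arc-disjoint strongly connected subgraphs containing both x and y. -/
/-!
Say `x = (u, w)` and `y = (v, w)`; the other case follows by exchanging the factors.
Besides `λ₂(G)` arc-disjoint `{u, v}`-strong subgraphs of `G` placed in the layer `G × {w}`,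
take `λ₂(H)` arc-disjoint `{w, w'}`-strong subgraphs `Hⱼ` of `H`. Each `Hⱼ` leaves `w` by an
arc `w → zⱼ` with `zⱼ ≠ w`, and the `zⱼ` are distinct by disjointness. The copies of `Hⱼ` at
`u` and at `v`, joined through the whole layer `G × {zⱼ}`, form an `{x, y}`-strong subgraph.
Once loops are discarded, these subgraphs are arc-disjoint from each other and from the first
family: arcs inside a copy of `H` and arcs inside a layer of `G` can only meet in loops.
-/

open Function Relation Set

lemma Fin.pairwise_disjoint_append {α : Type*} [PartialOrder α] [OrderBot α] {m n : ℕ}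
    {f : Fin m → α} {g : Fin n → α} (hf : Pairwise (Disjoint on f))
    (hg : Pairwise (Disjoint on g)) (hfg : ∀ i j, Disjoint (f i) (g j)) :
    Pairwise (Disjoint on Fin.append f g) := by
  intro i j hij
  induction i using Fin.addCases with
  | left i =>
    induction j using Fin.addCases with
    | left j => simpa [onFun] using hf (ne_of_apply_ne (Fin.castAdd n) hij)
    | right j => simpa [onFun] using hfg i j
  | right i =>
    induction j using Fin.addCases with
    | left j => simpa [onFun] using (hfg j i).symm
    | right j => simpa [onFun] using hg (ne_of_apply_ne (Fin.natAdd m) hij)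

namespace Digraph

variable {V V' W : Type*}

section StrongSubgraph

variable {D : Digraph V} {D' : Digraph V'} {S T : Set V} {B C : Set (V × V)}

def subgraphVerts (S : Set V) (B : Set (V × V)) : Set V :=
  S ∪ {v | ∃ e ∈ B, v = e.1 ∨ v = e.2}

lemma isStrongSubgraphOn_iff : D.IsStrongSubgraphOn S B ↔ B ⊆ D.ArcSet ∧
    ∀ a ∈ subgraphVerts S B, ∀ b ∈ subgraphVerts S B,
      ReflTransGen (fun a b => (a, b) ∈ B) a b :=
  Iff.rfl

lemma subgraphVerts_mono (hST : S ⊆ T) (hBC : B ⊆ C) :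
    subgraphVerts S B ⊆ subgraphVerts T C :=
  union_subset_union hST fun _ ⟨e, he, hv⟩ => ⟨e, hBC he, hv⟩

lemma snd_mem_subgraphVerts {a b : V} (h : (a, b) ∈ B) : b ∈ subgraphVerts S B :=
  Or.inr ⟨_, h, Or.inr rfl⟩

lemma IsStrongSubgraphOn.subset (h : D.IsStrongSubgraphOn S B) (hTS : T ⊆ S) :
    D.IsStrongSubgraphOn T B :=
  have hV := subgraphVerts_mono hTS (subset_refl B)
  ⟨h.1, fun a ha b hb => h.2 a (hV ha) b (hV hb)⟩

lemma IsStrongSubgraphOn.exists_arc_of_ne (h : D.IsStrongSubgraphOn S B) {a b : V}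
    (ha : a ∈ S) (hb : b ∈ S) (hab : a ≠ b) : ∃ c, (a, c) ∈ B := by
  rcases (h.2 a (Or.inl ha) b (Or.inl hb)).cases_head with rfl | ⟨c, hc, -⟩
  · exact absurd rfl hab
  · exact ⟨c, hc⟩

lemma isStrongSubgraphOn_arcSet (hD : D.IsStrong) (S : Set V) :
    D.IsStrongSubgraphOn S D.ArcSet :=
  ⟨subset_rfl, fun a _ b _ => hD a b⟩

lemma IsStrongSubgraphOn.diff_diagonal (h : D.IsStrongSubgraphOn S B) :
    D.IsStrongSubgraphOn S (B \ diagonal V) := by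
  refine ⟨sdiff_subset.trans h.1, fun a ha b hb => ?_⟩
  have hV := subgraphVerts_mono (subset_refl S) (sdiff_subset (s := B) (t := diagonal V))
  have hab := h.2 a (hV ha) b (hV hb)
  clear hb
  induction hab with
  | refl => exact .refl
  | @tail c d _ hcd ih =>
    by_cases hc : c = d
    · exact hc ▸ ih
    · exact ih.tail ⟨hcd, hc⟩

lemma IsStrongSubgraphOn.union (hB : D.IsStrongSubgraphOn S B) (hC : D.IsStrongSubgraphOn T C)
    {x : V} (hxB : x ∈ subgraphVerts S B) (hxC : x ∈ subgraphVerts T C) :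
    D.IsStrongSubgraphOn (S ∪ T) (B ∪ C) := by
  have hreach : ∀ a ∈ subgraphVerts (S ∪ T) (B ∪ C),
      ReflTransGen (fun a b => (a, b) ∈ B ∪ C) a x ∧
        ReflTransGen (fun a b => (a, b) ∈ B ∪ C) x a := by
    have hsplit : subgraphVerts (S ∪ T) (B ∪ C) = subgraphVerts S B ∪ subgraphVerts T C := by
      ext v
      simp only [subgraphVerts, mem_union, mem_ofPred_eq]
      grind
    rw [hsplit]
    rintro a (ha | ha)
    · exact ⟨ReflTransGen.mono (fun _ _ => Or.inl) _ _ (hB.2 a ha x hxB),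
        ReflTransGen.mono (fun _ _ => Or.inl) _ _ (hB.2 x hxB a ha)⟩
    · exact ⟨ReflTransGen.mono (fun _ _ => Or.inr) _ _ (hC.2 a ha x hxC),
        ReflTransGen.mono (fun _ _ => Or.inr) _ _ (hC.2 x hxC a ha)⟩
  exact ⟨union_subset hB.1 hC.1, fun a ha b hb => (hreach a ha).1.trans (hreach b hb).2⟩

lemma IsStrongSubgraphOn.image (h : D.IsStrongSubgraphOn S B) (φ : V → V')
    (hφ : ∀ a b, D.Adj a b → D'.Adj (φ a) (φ b)) :
    D'.IsStrongSubgraphOn (φ '' S) (Prod.map φ φ '' B) := by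
  have hV : subgraphVerts (φ '' S) (Prod.map φ φ '' B) = φ '' subgraphVerts S B := by
    ext v
    simp only [subgraphVerts, image_union, mem_union, mem_image, mem_ofPred_eq, Prod.exists,
      Prod.map_apply, Prod.mk.injEq]
    grind
  refine isStrongSubgraphOn_iff.2 ⟨?_, ?_⟩
  · rintro _ ⟨e, he, rfl⟩
    exact hφ _ _ (h.1 he)
  · rw [hV]
    rintro _ ⟨a, ha, rfl⟩ _ ⟨b, hb, rfl⟩
    exact (h.2 a ha b hb).lift φ fun c d hcd => ⟨(c, d), hcd, rfl⟩

end StrongSubgraph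

section Packing

variable {D : Digraph V} {S : Set V} {k n : ℕ}

def HasStrongPacking (D : Digraph V) (S : Set V) (k : ℕ) : Prop :=
  ∃ f : Fin k → Set (V × V), (∀ i, D.IsStrongSubgraphOn S (f i)) ∧ Pairwise (Disjoint on f)

lemma lambdaS_eq_sSup (D : Digraph V) (S : Set V) :
    D.lambdaS S = sSup {k | D.HasStrongPacking S k} :=
  rfl

lemma hasStrongPacking_zero (D : Digraph V) (S : Set V) : D.HasStrongPacking S 0 :=
  ⟨finZeroElim, finZeroElim, finZeroElim⟩

lemma HasStrongPacking.mono (h : D.HasStrongPacking S n) (hkn : k ≤ n) :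
    D.HasStrongPacking S k := by
  obtain ⟨f, hf, hdisj⟩ := h
  exact ⟨f ∘ Fin.castLE hkn, fun i => hf _,
    hdisj.comp_of_injective (Fin.castLE_injective hkn)⟩

lemma hasStrongPacking_of_le_lambdaS (hk : k ≤ D.lambdaS S) : D.HasStrongPacking S k := by
  by_cases hP : BddAbove {k | D.HasStrongPacking S k}
  · exact (Nat.sSup_mem ⟨0, hasStrongPacking_zero D S⟩ hP).mono hk
  · obtain ⟨n, hn, hkn⟩ := not_bddAbove_iff.1 hP k
    exact hn.mono hkn.le

/-- Every member of a packing contains an arc leaving `a`, so a packing has at most `|V|`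
members. -/
lemma HasStrongPacking.le_lambdaS [Finite V] {a b : V} (ha : a ∈ S) (hb : b ∈ S) (hab : a ≠ b)
    (h : D.HasStrongPacking S k) : k ≤ D.lambdaS S := by
  rw [lambdaS_eq_sSup]
  refine le_csSup ⟨Nat.card V, ?_⟩ h
  rintro n ⟨f, hf, hdisj⟩
  choose e he using fun i => (hf i).exists_arc_of_ne ha hb hab
  have he_inj : Injective e := fun i j hij =>
    hdisj.eq (not_disjoint_iff.2 ⟨_, he i, hij ▸ he j⟩)
  simpa using Nat.card_le_card_of_injective e he_inj

lemma exists_loopless_packing (hk : k ≤ D.lambdaS S) :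
    ∃ f : Fin k → Set (V × V),
      (∀ i, D.IsStrongSubgraphOn S (f i) ∧ Disjoint (f i) (diagonal V)) ∧
        Pairwise (Disjoint on f) := by
  obtain ⟨f, hf, hdisj⟩ := hasStrongPacking_of_le_lambdaS hk
  exact ⟨fun i => f i \ diagonal V, fun i => ⟨(hf i).diff_diagonal, disjoint_sdiff_left⟩,
    fun i j hij => (hdisj hij).mono sdiff_subset sdiff_subset⟩

lemma lambdaS_le_lambdaS_image [Finite V'] {D' : Digraph V'} (φ : V → V') (hφ : Injective φ)
    (hadj : ∀ a b, D.Adj a b → D'.Adj (φ a) (φ b)) {a b : V} (ha : a ∈ S) (hb : b ∈ S)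
    (hab : a ≠ b) : D.lambdaS S ≤ D'.lambdaS (φ '' S) := by
  obtain ⟨f, hf, hdisj⟩ := hasStrongPacking_of_le_lambdaS (le_refl (D.lambdaS S))
  have hφφ : Injective (Prod.map φ φ) := hφ.prodMap hφ
  exact HasStrongPacking.le_lambdaS (mem_image_of_mem φ ha) (mem_image_of_mem φ hb) (hφ.ne hab)
    ⟨fun i => Prod.map φ φ '' f i, fun i => (hf i).image φ hadj,
      fun i j hij => (disjoint_image_iff hφφ).2 (hdisj hij)⟩

lemma lambdaK_two_le_lambdaS_pair {a b : V} (hab : a ≠ b) : D.lambdaK 2 ≤ D.lambdaS {a, b} :=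
  Nat.sInf_le ⟨{a, b}, ncard_pair hab, rfl⟩

lemma lambdaK_two_eq_zero [Subsingleton V] (D : Digraph V) : D.lambdaK 2 = 0 := by
  refine Nat.sInf_eq_zero.2 (Or.inr (eq_empty_of_forall_notMem ?_))
  rintro m ⟨S, hS, -⟩
  have := ncard_le_one_of_subsingleton S
  omega

lemma exists_packing_with_arcs_from (H : Digraph W) (w : W) :
    ∃ (T : Set W) (g : Fin (H.lambdaK 2) → Set (W × W)) (z : Fin (H.lambdaK 2) → W),
      w ∈ T ∧
      (∀ j, H.IsStrongSubgraphOn T (g j) ∧ (w, z j) ∈ g j ∧ z j ≠ w) ∧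
        Pairwise (Disjoint on g) := by
  by_cases hW : ∃ w', w ≠ w'
  · obtain ⟨w', hww'⟩ := hW
    obtain ⟨g, hg, hdisj⟩ := exists_loopless_packing (lambdaK_two_le_lambdaS_pair (D := H) hww')
    choose z hz using fun j =>
      (hg j).1.exists_arc_of_ne (mem_insert w {w'}) (mem_insert_of_mem w rfl) hww'
    refine ⟨{w, w'}, g, z, mem_insert w {w'},
      fun j => ⟨(hg j).1, hz j, fun hzw => ?_⟩, hdisj⟩
    exact disjoint_left.1 (hg j).2 (hz j) hzw.symm
  · have : Subsingleton W := ⟨fun a b => by push Not at hW; exact (hW a).symm.trans (hW b)⟩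
    rw [lambdaK_two_eq_zero H]
    exact ⟨{w}, finZeroElim, finZeroElim, rfl, finZeroElim, finZeroElim⟩

end Packing

section CartProd

variable {G : Digraph V} {H : Digraph W}

lemma cartProd_adj_left (w : W) {a b : V} (h : G.Adj a b) : (G.cartProd H).Adj (a, w) (b, w) :=
  Or.inl ⟨h, rfl⟩

lemma cartProd_adj_right (u : V) {c d : W} (h : H.Adj c d) :
    (G.cartProd H).Adj (u, c) (u, d) :=
  Or.inr ⟨rfl, h⟩

lemma cartProd_adj_swap {p q : W × V} (h : (H.cartProd G).Adj p q) :
    (G.cartProd H).Adj p.swap q.swap :=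
  h.symm.imp (fun h => ⟨h.2, h.1⟩) fun h => ⟨h.2, h.1⟩

/-- The copy of the arc set `B` of `G` in the layer `G × {w}`. -/
def layerFst (B : Set (V × V)) (w : W) : Set ((V × W) × (V × W)) :=
  Prod.map (·, w) (·, w) '' B

/-- The copy of the arc set `C` of `H` in the layer `{u} × H`. -/
def layerSnd (u : V) (C : Set (W × W)) : Set ((V × W) × (V × W)) :=
  Prod.map (u, ·) (u, ·) '' C

lemma disjoint_layerFst {B B' : Set (V × V)} (h : Disjoint B B') (w : W) :
    Disjoint (layerFst B w) (layerFst B' w) :=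
  (disjoint_image_iff ((Prod.mk_left_injective w).prodMap (Prod.mk_left_injective w))).2 h

lemma disjoint_layerFst_of_ne {w w' : W} (h : w ≠ w') (B B' : Set (V × V)) :
    Disjoint (layerFst B w) (layerFst B' w') := by
  rw [disjoint_left]
  rintro _ ⟨_, -, rfl⟩ ⟨_, -, he⟩
  exact h (congrArg (·.1.2) he).symm

lemma disjoint_layerSnd {C C' : Set (W × W)} (h : Disjoint C C') (u : V) :
    Disjoint (layerSnd u C) (layerSnd u C') :=
  (disjoint_image_iff ((Prod.mk_right_injective u).prodMap (Prod.mk_right_injective u))).2 h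

lemma disjoint_layerSnd_of_ne {u v : V} (h : u ≠ v) (C C' : Set (W × W)) :
    Disjoint (layerSnd u C) (layerSnd v C') := by
  rw [disjoint_left]
  rintro _ ⟨_, -, rfl⟩ ⟨_, -, he⟩
  exact h (congrArg (·.1.1) he).symm

lemma disjoint_layerFst_layerSnd {B : Set (V × V)} (hB : Disjoint B (diagonal V)) (w : W)
    (u : V) (C : Set (W × W)) : Disjoint (layerFst B w) (layerSnd u C) := by
  rw [disjoint_left]
  rintro _ ⟨⟨a, b⟩, hab, rfl⟩ ⟨⟨c, d⟩, -, he⟩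
  simp only [Prod.map_apply, Prod.mk.injEq] at he
  obtain ⟨⟨rfl, -⟩, rfl, -⟩ := he
  exact disjoint_left.1 hB hab rfl

lemma IsStrongSubgraphOn.layerFst {S : Set V} {B : Set (V × V)} (h : G.IsStrongSubgraphOn S B)
    (H : Digraph W) (w : W) :
    (G.cartProd H).IsStrongSubgraphOn ((·, w) '' S) (layerFst B w) :=
  h.image _ fun _ _ => cartProd_adj_left w

lemma IsStrongSubgraphOn.layerSnd {T : Set W} {C : Set (W × W)} (h : H.IsStrongSubgraphOn T C)
    (G : Digraph V) (u : V) :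
    (G.cartProd H).IsStrongSubgraphOn ((u, ·) '' T) (layerSnd u C) :=
  h.image _ fun _ _ => cartProd_adj_right u

/-- The copies of `C` at `u` and at `v`, joined through the loopless layer `G × {z}`. -/
def hub (G : Digraph V) (u v : V) (C : Set (W × W)) (z : W) : Set ((V × W) × (V × W)) :=
  layerSnd u C ∪ layerFst (G.ArcSet \ diagonal V) z ∪ layerSnd v C

lemma isStrongSubgraphOn_hub (hG : G.IsStrong) {T : Set W} {C : Set (W × W)}
    (hC : H.IsStrongSubgraphOn T C) {w z : W} (hw : w ∈ T) (hz : (w, z) ∈ C) (u v : V) :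
    (G.cartProd H).IsStrongSubgraphOn {(u, w), (v, w)} (hub G u v C z) := by
  have hlayer := ((isStrongSubgraphOn_arcSet hG univ).diff_diagonal).layerFst H z
  have hu := (hC.layerSnd G u).union hlayer
    (snd_mem_subgraphVerts ⟨(w, z), hz, rfl⟩) (Or.inl ⟨u, mem_univ u, rfl⟩)
  have huv := hu.union (hC.layerSnd G v)
    (Or.inl (Or.inr ⟨v, mem_univ v, rfl⟩)) (snd_mem_subgraphVerts ⟨(w, z), hz, rfl⟩)
  refine huv.subset (insert_subset (Or.inl (Or.inl ⟨w, hw, rfl⟩)) ?_)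
  exact singleton_subset_iff.2 (Or.inr ⟨w, hw, rfl⟩)

lemma disjoint_hub {u v : V} (huv : u ≠ v) {C C' : Set (W × W)} (hC : Disjoint C C') {z z' : W}
    (hz : z ≠ z') : Disjoint (hub G u v C z) (hub G u v C' z') := by
  have hG : Disjoint (G.ArcSet \ diagonal V) (diagonal V) := disjoint_sdiff_left
  simp only [hub, disjoint_union_left, disjoint_union_right]
  exact ⟨⟨⟨⟨disjoint_layerSnd hC u, disjoint_layerFst_layerSnd hG z u C'⟩,
      disjoint_layerSnd_of_ne huv.symm C C'⟩,
    ⟨(disjoint_layerFst_layerSnd hG z' u C).symm, disjoint_layerFst_of_ne hz _ _⟩,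
      (disjoint_layerFst_layerSnd hG z' v C).symm⟩,
    ⟨disjoint_layerSnd_of_ne huv C C', disjoint_layerFst_layerSnd hG z v C'⟩,
      disjoint_layerSnd hC v⟩

lemma disjoint_layerFst_hub {B : Set (V × V)} (hB : Disjoint B (diagonal V)) {w z : W}
    (hwz : w ≠ z) (u v : V) (C : Set (W × W)) : Disjoint (layerFst B w) (hub G u v C z) := by
  simp only [hub, disjoint_union_right]
  exact ⟨⟨disjoint_layerFst_layerSnd hB w u C, disjoint_layerFst_of_ne hwz _ _⟩,
    disjoint_layerFst_layerSnd hB w v C⟩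

theorem lambdaK_two_add_le_lambdaS_cartProd [Finite V] [Finite W] (hG : G.IsStrong)
    (H : Digraph W) {u v : V} (huv : u ≠ v) (w : W) :
    G.lambdaK 2 + H.lambdaK 2 ≤ (G.cartProd H).lambdaS {(u, w), (v, w)} := by
  obtain ⟨f, hf, hf_disj⟩ := exists_loopless_packing (lambdaK_two_le_lambdaS_pair (D := G) huv)
  obtain ⟨T, g, z, hwT, hg, hg_disj⟩ := H.exists_packing_with_arcs_from w
  have hz_inj : Injective z := fun j j' hjj' =>
    hg_disj.eq (not_disjoint_iff.2 ⟨(w, z j), (hg j).2.1, hjj' ▸ (hg j').2.1⟩)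
  refine HasStrongPacking.le_lambdaS (mem_insert _ _) (mem_insert_of_mem _ rfl)
    (fun h => huv (congrArg Prod.fst h))
    ⟨Fin.append (fun i => layerFst (f i) w) (fun j => hub G u v (g j) (z j)), ?_, ?_⟩
  · intro i
    induction i using Fin.addCases with
    | left i => simpa [image_pair] using ((hf i).1.layerFst H w)
    | right j => simpa using isStrongSubgraphOn_hub hG (hg j).1 hwT (hg j).2.1 u v
  · refine Fin.pairwise_disjoint_append ?_ ?_ ?_
    · exact fun i i' hii' => disjoint_layerFst (hf_disj hii') w
    · exact fun j j' hjj' => disjoint_hub huv (hg_disj hjj') (hz_inj.ne hjj')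
    · exact fun i j => disjoint_layerFst_hub (hf i).2 (hg j).2.2.symm u v (g j)

end CartProd

end Digraph

theorem stmt11 {V W : Type*} [Fintype V] [Fintype W]
    (G : Digraph V) (H : Digraph W)
    (hG : G.IsStrong) (hH : H.IsStrong)
    (x y : V × W) (hxy : x ≠ y) (hco : x.1 = y.1 ∨ x.2 = y.2) :
    G.lambdaK 2 + H.lambdaK 2 ≤ (G.cartProd H).lambdaS {x, y} := by
  obtain ⟨a, c⟩ := x
  obtain ⟨b, d⟩ := y
  rcases hco with rfl | rfl
  · have hcd : c ≠ d := fun h => hxy (by rw [h])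
    calc G.lambdaK 2 + H.lambdaK 2 = H.lambdaK 2 + G.lambdaK 2 := add_comm _ _
      _ ≤ (H.cartProd G).lambdaS {(c, a), (d, a)} :=
        Digraph.lambdaK_two_add_le_lambdaS_cartProd hH G hcd a
      _ ≤ (G.cartProd H).lambdaS (Prod.swap '' {(c, a), (d, a)}) :=
        Digraph.lambdaS_le_lambdaS_image Prod.swap Prod.swap_injective
          (fun _ _ => Digraph.cartProd_adj_swap)
          (mem_insert _ _) (mem_insert_of_mem _ rfl) (fun h => hcd (congrArg Prod.fst h))
      _ = (G.cartProd H).lambdaS {(a, c), (a, d)} := by rw [image_pair]; rfl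
  · exact Digraph.lambdaK_two_add_le_lambdaS_cartProd hG H (fun h => hxy (by rw [h])) c
end

section
/- For integers n, m ≥ 3, λ_2(→C_n □ →C_m) = 2, where →C_n denotes the directed cycle on n vertices. -/
/-!
Every vertex of `→C_n □ →C_m` has out-degree two, and an `S`-strong subgraph must leave each
vertex of `S`; arc-disjoint ones leave it along distinct arcs, so `λ_S ≤ 2`. Conversely, a union of
full rows and full columns (at least one of each) is strong. For `u = (a, b)` and `v = (c, d)`,
choose a column `c' ∉ {a, c}` and a row `r ∉ {b, d}` (here `n, m ≥ 3` is used): rows `b, d` with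
column `c'`, and columns `a, c` with row `r`, are two arc-disjoint such unions containing `u, v`.
-/

open Relation

namespace Digraph

variable {V : Type*} {D : Digraph V} {S : Set V}

theorem isStrongSubgraphOn_of_hub {B : Set (V × V)} (P : Set V) (h : V) (hB : B ⊆ D.ArcSet)
    (hS : S ⊆ P) (hBP : ∀ e ∈ B, e.1 ∈ P ∧ e.2 ∈ P)
    (hto : ∀ p ∈ P, ReflTransGen (fun a b => (a, b) ∈ B) p h)
    (hfrom : ∀ p ∈ P, ReflTransGen (fun a b => (a, b) ∈ B) h p) :
    D.IsStrongSubgraphOn S B := by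
  have hP : ∀ p ∈ S ∪ {v | ∃ e ∈ B, v = e.1 ∨ v = e.2}, p ∈ P := by
    rintro p (hp | ⟨e, he, rfl | rfl⟩)
    exacts [hS hp, (hBP e he).1, (hBP e he).2]
  exact ⟨hB, fun p hp q hq => (hto p (hP p hp)).trans (hfrom q (hP q hq))⟩

theorem card_le_outDeg {u v : V} (hu : u ∈ S) (hv : v ∈ S) (huv : u ≠ v)
    (hfin : {w | D.Adj u w}.Finite) {k : ℕ} {f : Fin k → Set (V × V)}
    (hf : ∀ i, D.IsStrongSubgraphOn S (f i)) (hdisj : ∀ i j, i ≠ j → Disjoint (f i) (f j)) :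
    k ≤ D.outDeg u := by
  have hleave : ∀ i, ∃ w, (u, w) ∈ f i := fun i => by
    rcases ((hf i).2 u (Or.inl hu) v (Or.inl hv)).cases_head with h | ⟨w, hw, -⟩
    exacts [absurd h huv, ⟨w, hw⟩]
  choose g hg using hleave
  have hg_inj : Set.InjOn g Set.univ := fun i _ j _ hij => by_contra fun hne =>
    Set.disjoint_left.mp (hdisj i j hne) (hg i) (hij ▸ hg j)
  calc k = (Set.univ : Set (Fin k)).ncard := by simp
    _ ≤ D.outDeg u := Set.ncard_le_ncard_of_injOn g (fun i _ => (hf i).1 (hg i)) hg_inj hfin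

theorem lambdaS_eq_of_outDeg_le {u v : V} (hu : u ∈ S) (hv : v ∈ S) (huv : u ≠ v)
    (hfin : {w | D.Adj u w}.Finite) {k : ℕ} (f : Fin k → Set (V × V))
    (hf : ∀ i, D.IsStrongSubgraphOn S (f i)) (hdisj : ∀ i j, i ≠ j → Disjoint (f i) (f j))
    (hdeg : D.outDeg u ≤ k) :
    D.lambdaS S = k := by
  have hbound : ∀ j ∈ {j | ∃ g : Fin j → Set (V × V), (∀ i, D.IsStrongSubgraphOn S (g i)) ∧
      ∀ i i', i ≠ i' → Disjoint (g i) (g i')}, j ≤ k :=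
    fun j ⟨_, hg, hgd⟩ => (card_le_outDeg hu hv huv hfin hg hgd).trans hdeg
  exact le_antisymm (csSup_le ⟨k, f, hf, hdisj⟩ hbound) (le_csSup ⟨k, hbound⟩ ⟨f, hf, hdisj⟩)

theorem lambdaK_eq_of_forall {k c : ℕ} (hex : ∃ S : Set V, S.ncard = k)
    (h : ∀ S : Set V, S.ncard = k → D.lambdaS S = c) :
    D.lambdaK k = c := by
  have hset : {j | ∃ S : Set V, S.ncard = k ∧ D.lambdaS S = j} = {c} := by
    ext j
    constructor
    · rintro ⟨S, hS, rfl⟩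
      exact h S hS
    · rintro rfl
      obtain ⟨S, hS⟩ := hex
      exact ⟨S, hS, h S hS⟩
  rw [lambdaK, hset, csInf_singleton]

end Digraph

open Fin.NatCast Fin.CommRing in
theorem reflTransGen_of_fin_cycle {α : Type*} {R : α → α → Prop} {n : ℕ} [NeZero n]
    (f : Fin n → α) (h : ∀ x, R (f x) (f (x + 1))) (x y : Fin n) :
    ReflTransGen R (f x) (f y) := by
  have hsteps : ∀ k : ℕ, ReflTransGen R (f x) (f (x + k)) := fun k => by
    induction k with
    | zero => simpa using ReflTransGen.refl
    | succ k ih =>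
      rw [show x + ((k + 1 : ℕ) : Fin n) = x + k + 1 by push_cast; ring]
      exact ih.tail (h _)
  simpa using hsteps (y - x : Fin n)

namespace Fin

theorem add_one_ne_self {n : ℕ} [NeZero n] (hn : 2 ≤ n) (x : Fin n) : x + 1 ≠ x := by
  have : Nontrivial (Fin n) := nontrivial_iff_two_le.mpr hn
  open Fin.CommRing in simp

theorem exists_ne_and_ne {n : ℕ} (hn : 3 ≤ n) (a b : Fin n) : ∃ c, c ≠ a ∧ c ≠ b := by
  have hcard : ({a, b} : Finset (Fin n)).card < (Finset.univ : Finset (Fin n)).card := by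
    simpa using Finset.card_le_two.trans_lt (by omega : 2 < n)
  obtain ⟨c, -, hc⟩ := Finset.exists_mem_notMem_of_card_lt_card hcard
  exact ⟨c, by simpa [not_or] using hc⟩

end Fin

section Torus

variable {n m : ℕ} [NeZero n] [NeZero m]

theorem dirCycle_adj_iff {i j : Fin n} : (dirCycle n).Adj i j ↔ j = i + 1 := by
  rw [Fin.ext_iff, Fin.val_add, Fin.val_one', Nat.add_mod_mod]
  rfl

theorem cartProd_dirCycle_adj_iff {p q : Fin n × Fin m} :
    ((dirCycle n).cartProd (dirCycle m)).Adj p q ↔ q = (p.1 + 1, p.2) ∨ q = (p.1, p.2 + 1) := by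
  obtain ⟨⟨x, y⟩, ⟨x', y'⟩⟩ := (p, q)
  simp only [Digraph.cartProd, dirCycle_adj_iff, Prod.ext_iff]
  grind

theorem cartProd_dirCycle_outDeg_le_two (p : Fin n × Fin m) :
    ((dirCycle n).cartProd (dirCycle m)).outDeg p ≤ 2 :=
  calc _ ≤ ({(p.1 + 1, p.2), (p.1, p.2 + 1)} : Set (Fin n × Fin m)).ncard :=
        Set.ncard_le_ncard fun _ hq => cartProd_dirCycle_adj_iff.mp hq
    _ ≤ 2 := (Set.ncard_insert_le _ _).trans (by simp)

/-- The arcs of the columns `{c} × Fin m`, `c ∈ C`, and of the rows `Fin n × {r}`, `r ∈ R`. -/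
def gridArcs (C : Set (Fin n)) (R : Set (Fin m)) : Set ((Fin n × Fin m) × (Fin n × Fin m)) :=
  {e | e.1.1 ∈ C ∧ e.2 = (e.1.1, e.1.2 + 1)} ∪ {e | e.1.2 ∈ R ∧ e.2 = (e.1.1 + 1, e.1.2)}

variable {C C' : Set (Fin n)} {R R' : Set (Fin m)}

theorem mem_gridArcs {p q : Fin n × Fin m} :
    (p, q) ∈ gridArcs C R ↔ p.1 ∈ C ∧ q = (p.1, p.2 + 1) ∨ p.2 ∈ R ∧ q = (p.1 + 1, p.2) :=
  Iff.rfl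

theorem gridArcs_subset_arcSet :
    gridArcs C R ⊆ ((dirCycle n).cartProd (dirCycle m)).ArcSet := by
  rintro ⟨p, q⟩ h
  obtain ⟨-, rfl⟩ | ⟨-, rfl⟩ := mem_gridArcs.mp h
  exacts [cartProd_dirCycle_adj_iff.mpr (Or.inr rfl), cartProd_dirCycle_adj_iff.mpr (Or.inl rfl)]

theorem reflTransGen_gridArcs_col {c : Fin n} (hc : c ∈ C) (y y' : Fin m) :
    ReflTransGen (fun a b => (a, b) ∈ gridArcs C R) (c, y) (c, y') :=
  reflTransGen_of_fin_cycle (fun z => (c, z)) (fun _ => Or.inl ⟨hc, rfl⟩) y y'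

theorem reflTransGen_gridArcs_row {r : Fin m} (hr : r ∈ R) (x x' : Fin n) :
    ReflTransGen (fun a b => (a, b) ∈ gridArcs C R) (x, r) (x', r) :=
  reflTransGen_of_fin_cycle (fun z => (z, r)) (fun _ => Or.inr ⟨hr, rfl⟩) x x'

theorem isStrongSubgraphOn_gridArcs {S : Set (Fin n × Fin m)} {c : Fin n} {r : Fin m}
    (hc : c ∈ C) (hr : r ∈ R) (hS : ∀ p ∈ S, p.1 ∈ C ∨ p.2 ∈ R) :
    ((dirCycle n).cartProd (dirCycle m)).IsStrongSubgraphOn S (gridArcs C R) := by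
  refine Digraph.isStrongSubgraphOn_of_hub {p | p.1 ∈ C ∨ p.2 ∈ R} (c, r)
    gridArcs_subset_arcSet hS ?_ ?_ ?_
  · rintro ⟨p, q⟩ hpq
    obtain ⟨h, rfl⟩ | ⟨h, rfl⟩ := mem_gridArcs.mp hpq
    exacts [⟨Or.inl h, Or.inl h⟩, ⟨Or.inr h, Or.inr h⟩]
  · rintro ⟨x, y⟩ (hx | hy)
    · exact (reflTransGen_gridArcs_col hx y r).trans (reflTransGen_gridArcs_row hr x c)
    · exact (reflTransGen_gridArcs_row hy x c).trans (reflTransGen_gridArcs_col hc y r)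
  · rintro ⟨x, y⟩ (hx | hy)
    · exact (reflTransGen_gridArcs_row hr c x).trans (reflTransGen_gridArcs_col hx r y)
    · exact (reflTransGen_gridArcs_col hc r y).trans (reflTransGen_gridArcs_row hy c x)

theorem disjoint_gridArcs (hn : 2 ≤ n) (hm : 2 ≤ m) (hC : Disjoint C C') (hR : Disjoint R R') :
    Disjoint (gridArcs C R) (gridArcs C' R') := by
  rw [Set.disjoint_left]
  rintro ⟨⟨x, y⟩, q⟩ hq hq'
  obtain ⟨h, rfl⟩ | ⟨h, rfl⟩ := mem_gridArcs.mp hq <;>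
    obtain ⟨h', he⟩ | ⟨h', he⟩ := mem_gridArcs.mp hq'
  · exact Set.disjoint_left.mp hC h h'
  · exact Fin.add_one_ne_self hn x (Prod.ext_iff.mp he).1.symm
  · exact Fin.add_one_ne_self hm y (Prod.ext_iff.mp he).2.symm
  · exact Set.disjoint_left.mp hR h h'

theorem lambdaS_cartProd_dirCycle_pair (hn : 3 ≤ n) (hm : 3 ≤ m) {u v : Fin n × Fin m}
    (huv : u ≠ v) :
    ((dirCycle n).cartProd (dirCycle m)).lambdaS {u, v} = 2 := by
  obtain ⟨c, hcu, hcv⟩ := Fin.exists_ne_and_ne hn u.1 v.1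
  obtain ⟨r, hru, hrv⟩ := Fin.exists_ne_and_ne hm u.2 v.2
  have hdisj : Disjoint (gridArcs {c} {u.2, v.2}) (gridArcs {u.1, v.1} {r}) :=
    disjoint_gridArcs (by omega) (by omega) (by simp [hcu, hcv]) (by simp [hru, hrv])
  refine Digraph.lambdaS_eq_of_outDeg_le (Set.mem_insert u {v}) (Set.mem_insert_of_mem u rfl)
    huv (Set.toFinite _) ![gridArcs {c} {u.2, v.2}, gridArcs {u.1, v.1} {r}] ?_ ?_
    (cartProd_dirCycle_outDeg_le_two u)
  · refine Fin.forall_fin_two.mpr ⟨?_, ?_⟩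
    · exact isStrongSubgraphOn_gridArcs rfl (Set.mem_insert _ _) (by rintro p (rfl | rfl) <;> simp)
    · exact isStrongSubgraphOn_gridArcs (Set.mem_insert _ _) rfl (by rintro p (rfl | rfl) <;> simp)
  · simp [Fin.forall_fin_two, hdisj, hdisj.symm]

end Torus

theorem stmt12 (n m : ℕ) (hn : 3 ≤ n) (hm : 3 ≤ m) :
    ((dirCycle n).cartProd (dirCycle m)).lambdaK 2 = 2 := by
  have : NeZero n := ⟨by omega⟩
  have : NeZero m := ⟨by omega⟩
  have hpair : ((0 : Fin n), (0 : Fin m)) ≠ (0 + 1, 0) := by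
    simpa [Prod.ext_iff] using (Fin.add_one_ne_self (by omega) (0 : Fin n)).symm
  refine Digraph.lambdaK_eq_of_forall ⟨_, Set.ncard_pair hpair⟩ fun S hS => ?_
  obtain ⟨u, v, huv, rfl⟩ := Set.ncard_eq_two.mp hS
  exact lambdaS_cartProd_dirCycle_pair hn hm huv
end

section
/- For an integer n ≥ 3 and any tree T on m ≥ 2 vertices, λ_2(→C_n □ ↔T) = 2, where →C_n is the directed cycle on n vertices and ↔T is the complete biorientation of T. -/
/-!
Lower bound: any two vertices of `→C_n □ ↔T` lie in two arc-disjoint strong subgraphs. If both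
lie in one cycle copy `→C_n × {s}`, take that copy, and a second cycle copy `→C_n × {s'}`
joined to them by the tree copies through them. For `(a, s)` and `(b, t)` with `a ≠ b`, `s ≠ t`,
take `→C_n × {s} ∪ {b} × ↔T` and `→C_n × {t} ∪ {a} × ↔T`. For `(a, s)` and `(a, t)`, take a
closed walk that runs around the cycle copy of `s` and returns through the copies of the
`s`–`t` path of `T` at levels `a - 1` and `a`, together with its mirror image exchanging `s`
and `t`; they are arc-disjoint because a path never uses an edge in both directions.

Upper bound: for a leaf `ℓ` of `T`, the vertex `(0, ℓ)` has out-degree 2, and every strong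
subgraph containing it and another vertex uses one of its out-arcs.
-/

open Relation

open Fin.CommRing in
theorem Fin.reflTransGen_of_forall_ne_sub_one {n : ℕ} [NeZero n] {r : Fin n → Fin n → Prop}
    {m : Fin n} (hr : ∀ c, c ≠ m - 1 → r c (c + 1)) (i : Fin n) :
    ReflTransGen r m i ∧ ReflTransGen r i (m - 1) := by
  have step (k : ℕ) (hk : k + 1 < n) : r (m + k) (m + (k + 1 : ℕ)) := by
    have hne : m + k ≠ m - 1 := by
      intro h
      have : ((k + 1 : ℕ) : Fin n) = 0 := by push_cast; linear_combination h
      exact absurd (Nat.le_of_dvd k.succ_pos (Fin.natCast_eq_zero.mp this)) (by omega)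
    simpa [add_assoc] using hr _ hne
  have chain (j k : ℕ) (hjk : j ≤ k) (hk : k < n) : ReflTransGen r (m + j) (m + k) := by
    induction k, hjk using Nat.le_induction with
    | base => rfl
    | succ k _ ih => exact (ih (by omega)).tail (step k hk)
  have hi : m + ((i - m : Fin n) : ℕ) = i := by simp
  have hlast : m + ((n - 1 : ℕ) : Fin n) = m - 1 := by
    rw [Nat.cast_sub NeZero.one_le]; simp [sub_eq_add_neg]
  constructor
  · simpa [hi] using chain 0 _ (Nat.zero_le _) (i - m).isLt
  · have hn : n - 1 < n := Nat.sub_one_lt (NeZero.ne n)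
    simpa [hi, hlast] using chain _ (n - 1) (Nat.le_sub_one_of_lt (i - m).isLt) hn

theorem SimpleGraph.Walk.reflTransGen_of_forall_darts {V : Type*} {G : SimpleGraph V}
    {r : V → V → Prop} {u v : V} (p : G.Walk u v) (h : ∀ d ∈ p.darts, r d.fst d.snd) :
    ReflTransGen r u v := by
  induction p with
  | nil => rfl
  | cons hadj q ih =>
    exact .head (h _ List.mem_cons_self) (ih fun d hd => h d (List.mem_cons_of_mem _ hd))

theorem SimpleGraph.Walk.IsTrail.disjoint_darts_reverse {V : Type*} {G : SimpleGraph V}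
    {u v : V} {p : G.Walk u v} (hp : p.IsTrail) :
    Disjoint {d | d ∈ p.darts} {d | d ∈ p.reverse.darts} := by
  refine Set.disjoint_left.mpr fun d hd hd' => d.symm_ne ?_
  have hsymm : d.symm ∈ p.darts := SimpleGraph.Walk.mem_darts_reverse.mp hd'
  exact List.inj_on_of_nodup_map hp.edges_nodup hsymm hd d.edge_symm

structure Sweeps {α : Type*} (B : Set (α × α)) (W : Set α) (u v : α) : Prop where
  left_mem : u ∈ W
  right_mem : v ∈ W
  ends_mem : ∀ e ∈ B, e.1 ∈ W ∧ e.2 ∈ W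
  reach : ∀ x ∈ W,
    ReflTransGen (fun a b => (a, b) ∈ B) u x ∧ ReflTransGen (fun a b => (a, b) ∈ B) x v

namespace Sweeps

variable {α : Type*} {B B₁ B₂ : Set (α × α)} {W W₁ W₂ : Set α} {u v w : α}

theorem trans (h₁ : Sweeps B₁ W₁ u v) (h₂ : Sweeps B₂ W₂ v w) :
    Sweeps (B₁ ∪ B₂) (W₁ ∪ W₂) u w := by
  have lift₁ := ReflTransGen.mono (r := fun a b => (a, b) ∈ B₁)
    (p := fun a b => (a, b) ∈ B₁ ∪ B₂) fun _ _ => Or.inl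
  have lift₂ := ReflTransGen.mono (r := fun a b => (a, b) ∈ B₂)
    (p := fun a b => (a, b) ∈ B₁ ∪ B₂) fun _ _ => Or.inr
  have huv := lift₁ _ _ (h₁.reach v h₁.right_mem).1
  have hvw := lift₂ _ _ (h₂.reach v h₂.left_mem).2
  refine ⟨Or.inl h₁.left_mem, Or.inr h₂.right_mem, ?_, ?_⟩
  · rintro e (he | he)
    exacts [(h₁.ends_mem e he).imp Or.inl Or.inl, (h₂.ends_mem e he).imp Or.inr Or.inr]
  · rintro x (hx | hx)
    · exact ⟨lift₁ _ _ (h₁.reach x hx).1, (lift₁ _ _ (h₁.reach x hx).2).trans hvw⟩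
    · exact ⟨huv.trans (lift₂ _ _ (h₂.reach x hx).1), lift₂ _ _ (h₂.reach x hx).2⟩

theorem rebase (h : Sweeps B W u u) (hv : v ∈ W) : Sweeps B W v v :=
  ⟨hv, hv, h.ends_mem, fun x hx =>
    ⟨(h.reach v hv).2.trans (h.reach x hx).1, (h.reach x hx).2.trans (h.reach v hv).1⟩⟩

theorem isStrongSubgraphOn {D : Digraph α} {S : Set α} (h : Sweeps B W u u)
    (hB : B ⊆ D.ArcSet) (hS : S ⊆ W) : D.IsStrongSubgraphOn S B := by
  have hW : S ∪ {v | ∃ e ∈ B, v = e.1 ∨ v = e.2} ⊆ W := by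
    rintro x (hx | ⟨e, he, rfl | rfl⟩)
    exacts [hS hx, (h.ends_mem e he).1, (h.ends_mem e he).2]
  exact ⟨hB, fun x hx y hy => (h.reach x (hW hx)).2.trans (h.reach y (hW hy)).1⟩

end Sweeps

namespace Digraph

variable {α : Type*} {D : Digraph α} {S : Set α}

theorem card_le_outDeg_of_strongSubgraphs [Finite α] (hS : S.Nontrivial) {u : α} (hu : u ∈ S)
    {k : ℕ} {f : Fin k → Set (α × α)} (hf : ∀ i, D.IsStrongSubgraphOn S (f i))
    (hdisj : ∀ i j, i ≠ j → Disjoint (f i) (f j)) : k ≤ D.outDeg u := by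
  obtain ⟨v, hv, hvu⟩ := hS.exists_ne u
  have hout (i : Fin k) : ∃ w, (u, w) ∈ f i ∧ D.Adj u w := by
    obtain ⟨hsub, hconn⟩ := hf i
    rcases (hconn u (Or.inl hu) v (Or.inl hv)).cases_head with h | ⟨w, hw, -⟩
    · exact absurd h.symm hvu
    · exact ⟨w, hw, hsub hw⟩
  choose g hg hadj using hout
  have hinj : Function.Injective fun i => (⟨g i, hadj i⟩ : {w | D.Adj u w}) := by
    intro i j hij
    by_contra hne
    have hgij : g i = g j := congrArg Subtype.val hij
    exact Set.disjoint_left.mp (hdisj i j hne) (hg i) (hgij ▸ hg j)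
  calc k = Nat.card (Fin k) := (Nat.card_fin k).symm
    _ ≤ Nat.card {w | D.Adj u w} := Nat.card_le_card_of_injective _ hinj
    _ = D.outDeg u := Nat.card_coe_set_eq _

theorem lambdaS_le_outDeg_s14 [Finite α] (hS : S.Nontrivial) {u : α} (hu : u ∈ S) :
    D.lambdaS S ≤ D.outDeg u :=
  csSup_le ⟨0, Fin.elim0, fun i => i.elim0, fun i => i.elim0⟩ fun _ ⟨_, hf, hdisj⟩ =>
    card_le_outDeg_of_strongSubgraphs hS hu hf hdisj

theorem two_le_lambdaS [Finite α] (hS : S.Nontrivial) {B₁ B₂ : Set (α × α)}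
    (h₁ : D.IsStrongSubgraphOn S B₁) (h₂ : D.IsStrongSubgraphOn S B₂) (hB : Disjoint B₁ B₂) :
    2 ≤ D.lambdaS S := by
  obtain ⟨u, hu⟩ := hS.nonempty
  refine le_csSup ⟨D.outDeg u, fun _ ⟨_, hf, hdisj⟩ =>
    card_le_outDeg_of_strongSubgraphs hS hu hf hdisj⟩ ⟨![B₁, B₂], ?_, ?_⟩
  · simp [Fin.forall_fin_two, h₁, h₂]
  · simp [Fin.forall_fin_two, hB, hB.symm]

theorem cartProd_outDeg_le {β : Type*} [Finite α] [Finite β] (G : Digraph α) (H : Digraph β)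
    (a : α) (b : β) : (G.cartProd H).outDeg (a, b) ≤ G.outDeg a + H.outDeg b := by
  have hsub : {w | (G.cartProd H).Adj (a, b) w} ⊆
      (·, b) '' {x | G.Adj a x} ∪ (a, ·) '' {y | H.Adj b y} := by
    rintro ⟨x, y⟩ (⟨hx, rfl⟩ | ⟨rfl, hy⟩)
    exacts [Or.inl ⟨x, hx, rfl⟩, Or.inr ⟨y, hy, rfl⟩]
  calc (G.cartProd H).outDeg (a, b)
      ≤ ((·, b) '' {x | G.Adj a x} ∪ (a, ·) '' {y | H.Adj b y}).ncard := Set.ncard_le_ncard hsub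
    _ ≤ G.outDeg a + H.outDeg b :=
      (Set.ncard_union_le _ _).trans (add_le_add Set.ncard_image_le Set.ncard_image_le)

theorem lambdaK_eq_of_forall_le_of_exists {k m : ℕ}
    (hle : ∀ S : Set α, S.ncard = k → m ≤ D.lambdaS S)
    (hex : ∃ S : Set α, S.ncard = k ∧ D.lambdaS S ≤ m) : D.lambdaK k = m := by
  obtain ⟨S, hS, hSm⟩ := hex
  have hSeq : D.lambdaS S = m := le_antisymm hSm (hle S hS)
  exact le_antisymm (Nat.sInf_le ⟨S, hS, hSeq⟩)
    (le_csInf ⟨m, S, hS, hSeq⟩ fun _ ⟨S', hS', hm⟩ => hm ▸ hle S' hS')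

end Digraph

theorem dirCycle_outDeg_le_one (n : ℕ) (i : Fin n) : (dirCycle n).outDeg i ≤ 1 :=
  Set.ncard_le_one_iff_subsingleton.mpr fun _ (hj : _ = _) _ (hk : _ = _) =>
    Fin.ext (hj.trans hk.symm)

theorem SimpleGraph.biorient_outDeg {V : Type*} (T : SimpleGraph V) (x : V)
    [Fintype (T.neighborSet x)] : T.biorient.outDeg x = T.degree x := by
  rw [← T.card_neighborSet_eq_degree, ← Nat.card_eq_fintype_card]
  exact (Nat.card_coe_set_eq _).symm

theorem dirCycle_cartProd_outDeg_le_two {V : Type*} [Finite V] {T : SimpleGraph V} {ℓ : V}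
    [Fintype (T.neighborSet ℓ)] (hℓ : T.degree ℓ = 1) (n : ℕ) (c : Fin n) :
    ((dirCycle n).cartProd T.biorient).outDeg (c, ℓ) ≤ 2 :=
  calc _ ≤ (dirCycle n).outDeg c + T.biorient.outDeg ℓ := Digraph.cartProd_outDeg_le _ _ _ _
    _ ≤ 1 + 1 := add_le_add (dirCycle_outDeg_le_one n c) (T.biorient_outDeg ℓ ▸ hℓ.le)

namespace CycleTreeProduct

open Set

variable {V : Type*} {n : ℕ} [NeZero n] {T : SimpleGraph V}

def cycleArc (p : Fin n × V) : (Fin n × V) × (Fin n × V) := (p, (p.1 + 1, p.2))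

def treeArc (q : Fin n × T.Dart) : (Fin n × V) × (Fin n × V) :=
  ((q.1, q.2.fst), (q.1, q.2.snd))

/-- Every arc of `→C_n □ ↔T` is a `cycleArc` or a `treeArc`, so a subgraph is described by
the tails `X` of its cycle arcs and the levelled darts `Y` of its tree arcs. -/
def arcs (T : SimpleGraph V) (X : Set (Fin n × V)) (Y : Set (Fin n × T.Dart)) :
    Set ((Fin n × V) × (Fin n × V)) :=
  cycleArc '' X ∪ treeArc '' Y

theorem arcs_subset_arcSet (X : Set (Fin n × V)) (Y : Set (Fin n × T.Dart)) :
    arcs T X Y ⊆ ((dirCycle n).cartProd T.biorient).ArcSet := by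
  rintro _ (⟨⟨c, x⟩, -, rfl⟩ | ⟨⟨c, d⟩, -, rfl⟩)
  · refine Or.inl ⟨?_, rfl⟩
    show ((c + 1 : Fin n) : ℕ) = (c + 1) % n
    rw [Fin.val_add, Fin.val_one', Nat.add_mod_mod]
  · exact Or.inr ⟨rfl, d.adj⟩

theorem arcs_union (X₁ X₂ : Set (Fin n × V)) (Y₁ Y₂ : Set (Fin n × T.Dart)) :
    arcs T X₁ Y₁ ∪ arcs T X₂ Y₂ = arcs T (X₁ ∪ X₂) (Y₁ ∪ Y₂) := by
  simp only [arcs, image_union]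
  exact union_union_union_comm _ _ _ _

theorem disjoint_arcs (hn : 2 ≤ n) {X₁ X₂ : Set (Fin n × V)} {Y₁ Y₂ : Set (Fin n × T.Dart)}
    (hX : Disjoint X₁ X₂) (hY : Disjoint Y₁ Y₂) : Disjoint (arcs T X₁ Y₁) (arcs T X₂ Y₂) := by
  have hcycle : Function.Injective (cycleArc (n := n) (V := V)) := fun p q h =>
    (Prod.ext_iff.mp h).1
  have htree : Function.Injective (treeArc (n := n) (T := T)) := by
    rintro ⟨c, d⟩ ⟨c', d'⟩ h
    simp only [treeArc, Prod.mk.injEq] at h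
    obtain ⟨⟨rfl, h₁⟩, -, h₂⟩ := h
    exact Prod.ext rfl (SimpleGraph.Dart.ext _ _ (Prod.ext h₁ h₂))
  have hcross (X : Set (Fin n × V)) (Y : Set (Fin n × T.Dart)) :
      Disjoint (cycleArc '' X) (treeArc '' Y) := by
    refine Set.disjoint_left.mpr ?_
    rintro _ ⟨⟨c, x⟩, -, rfl⟩ ⟨⟨c', d⟩, -, h⟩
    simp only [cycleArc, treeArc, Prod.mk.injEq] at h
    have hne : c + 1 ≠ c := by simp; omega
    exact hne (h.2.1.symm.trans h.1.1)
  simp only [arcs, disjoint_union_left, disjoint_union_right]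
  exact ⟨⟨(disjoint_image_iff hcycle).mpr hX, (hcross _ _).symm⟩,
    hcross _ _, (disjoint_image_iff htree).mpr hY⟩

theorem sweeps_cycleArc (c : Fin n) (x : V) :
    Sweeps (arcs T {(c, x)} ∅) {(c, x), (c + 1, x)} (c, x) (c + 1, x) := by
  have hmem : ((c, x), (c + 1, x)) ∈ arcs T {(c, x)} ∅ :=
    Or.inl ⟨_, rfl, rfl⟩
  refine ⟨by simp, by simp, ?_, ?_⟩
  · rintro _ (⟨_, rfl, rfl⟩ | ⟨_, ⟨⟩, -⟩)
    simp [cycleArc]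
  · rintro y (rfl | rfl)
    exacts [⟨.refl, .single hmem⟩, ⟨.single hmem, .refl⟩]

theorem sweeps_cycle_erase (m : Fin n) (s : V) :
    Sweeps (arcs T ({m - 1}ᶜ ×ˢ {s}) ∅) (univ ×ˢ {s}) (m, s) (m - 1, s) := by
  refine ⟨by simp, by simp, ?_, ?_⟩
  · rintro _ (⟨⟨c, x⟩, ⟨-, rfl : x = s⟩, rfl⟩ | ⟨_, ⟨⟩, -⟩)
    simp [cycleArc]
  · rintro ⟨i, x⟩ ⟨-, rfl : x = s⟩
    have hlift := ReflTransGen.lift (p := fun a b => (a, b) ∈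
      arcs T ({m - 1}ᶜ ×ˢ {x}) ∅) (·, x) le_rfl
    have hr := Fin.reflTransGen_of_forall_ne_sub_one
      (r := fun c c' => ((c, x), (c', x)) ∈ arcs T ({m - 1}ᶜ ×ˢ {x}) ∅)
      (m := m) (fun c hc => Or.inl ⟨(c, x), ⟨hc, rfl⟩, rfl⟩) i
    exact ⟨hlift _ _ hr.1, hlift _ _ hr.2⟩

theorem sweeps_cycle (m : Fin n) (s : V) :
    Sweeps (arcs T (univ ×ˢ {s}) ∅) (univ ×ˢ {s}) (m, s) (m, s) := by
  have h := (sweeps_cycle_erase (T := T) m s).trans (sweeps_cycleArc (T := T) (m - 1) s)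
  have hX : {m - 1}ᶜ ×ˢ {s} ∪ {(m - 1, s)} = (univ ×ˢ {s} : Set (Fin n × V)) := by
    ext ⟨c, x⟩
    by_cases hc : c = m - 1 <;> simp [hc]
  have hW : univ ×ˢ {s} ∪ {(m - 1, s), (m, s)} = (univ ×ˢ {s} : Set (Fin n × V)) :=
    union_eq_left.mpr (by simp [insert_subset_iff])
  rwa [sub_add_cancel, arcs_union, hX, union_empty, hW] at h

theorem sweeps_treeCopy (hT : T.Preconnected) (c : Fin n) (x : V) :
    Sweeps (arcs T ∅ ({c} ×ˢ univ)) ({c} ×ˢ univ) (c, x) (c, x) := by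
  refine ⟨by simp, by simp, ?_, ?_⟩
  · rintro _ (⟨_, ⟨⟩, -⟩ | ⟨⟨c', d⟩, ⟨rfl : c' = c, -⟩, rfl⟩)
    simp [treeArc]
  · rintro ⟨c', y⟩ ⟨rfl : c' = c, -⟩
    have hlift := ReflTransGen.lift (r := T.Adj)
      (p := fun a b => (a, b) ∈ arcs T ∅ ({c'} ×ˢ univ)) (c', ·)
      fun a b hab => Or.inr ⟨(c', ⟨(a, b), hab⟩), ⟨rfl, trivial⟩, rfl⟩
    exact ⟨hlift _ _ ((SimpleGraph.reachable_iff_reflTransGen x y).mp (hT x y)),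
      hlift _ _ ((SimpleGraph.reachable_iff_reflTransGen y x).mp (hT y x))⟩

theorem sweeps_walkCopy (c : Fin n) {s t : V} (w : T.Walk s t) :
    Sweeps (arcs T ∅ ({c} ×ˢ {d | d ∈ w.darts})) ({c} ×ˢ {x | x ∈ w.support}) (c, s) (c, t) := by
  classical
  have reach {u v : V} (q : T.Walk u v) (hq : q.darts ⊆ w.darts) :
      ReflTransGen (fun a b => (a, b) ∈ arcs T ∅ ({c} ×ˢ {d | d ∈ w.darts})) (c, u) (c, v) :=
    ReflTransGen.lift (c, ·) le_rfl _ _ <|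
      q.reflTransGen_of_forall_darts (r := fun a b => ((c, a), (c, b)) ∈ _)
        fun d hd => Or.inr ⟨(c, d), ⟨rfl, hq hd⟩, rfl⟩
  refine ⟨by simp, ⟨rfl, w.end_mem_support⟩, ?_, ?_⟩
  · rintro _ (⟨_, ⟨⟩, -⟩ | ⟨⟨c', d⟩, ⟨rfl : c' = c, hd⟩, rfl⟩)
    exact ⟨⟨rfl, w.dart_fst_mem_support_of_mem_darts hd⟩,
      ⟨rfl, w.dart_snd_mem_support_of_mem_darts hd⟩⟩
  · rintro ⟨c', x⟩ ⟨rfl : c' = c, hx : x ∈ w.support⟩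
    exact ⟨reach _ (w.darts_takeUntil_subset_darts hx),
      reach _ (w.darts_dropUntil_subset_darts hx)⟩

theorem sweeps_cycle_treeCopy (hT : T.Preconnected) (b : Fin n) (s : V) :
    Sweeps (arcs T (univ ×ˢ {s}) ({b} ×ˢ univ)) (univ ×ˢ {s} ∪ {b} ×ˢ univ) (b, s) (b, s) := by
  have h := (sweeps_cycle (T := T) b s).trans (sweeps_treeCopy hT b s)
  rwa [arcs_union, union_empty, empty_union] at h

/-- The closed walk `(a, s) → (a + 1, s) → ⋯ → (a - 1, s)`, then along `p` at level `a - 1` to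
`(a - 1, t)`, across to `(a, t)`, and back along `p` at level `a` to `(a, s)`. -/
def loopArcs (a : Fin n) {s t : V} (p : T.Walk s t) : Set ((Fin n × V) × (Fin n × V)) :=
  arcs T ({a - 1}ᶜ ×ˢ {s} ∪ {(a - 1, t)})
    ({a - 1} ×ˢ {d | d ∈ p.darts} ∪ {a} ×ˢ {d | d ∈ p.reverse.darts})

theorem isStrongSubgraphOn_loopArcs (a : Fin n) {s t : V} (p : T.Walk s t) :
    ((dirCycle n).cartProd T.biorient).IsStrongSubgraphOn {(a, s), (a, t)} (loopArcs a p) := by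
  have hacross := sweeps_cycleArc (T := T) (a - 1) t
  rw [sub_add_cancel] at hacross
  have h := (((sweeps_cycle_erase (T := T) a s).trans (sweeps_walkCopy (a - 1) p)).trans
    hacross).trans (sweeps_walkCopy a p.reverse)
  simp only [arcs_union, union_empty, empty_union] at h
  exact h.isStrongSubgraphOn (arcs_subset_arcSet _ _) (by simp [insert_subset_iff])

theorem disjoint_loopArcs (hn : 2 ≤ n) (a : Fin n) {s t : V} (hst : s ≠ t) {p : T.Walk s t}
    (hp : p.IsTrail) : Disjoint (loopArcs a p) (loopArcs a p.reverse) := by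
  have ha : a - 1 ≠ a := by simp; omega
  have hdarts := hp.disjoint_darts_reverse
  rw [loopArcs, loopArcs, SimpleGraph.Walk.reverse_reverse]
  refine disjoint_arcs hn ?_ ?_
  · simp [disjoint_prod, hst]
  · simp only [disjoint_union_left, disjoint_union_right, disjoint_prod, disjoint_singleton]
    exact ⟨⟨Or.inr hdarts, Or.inl ha.symm⟩, Or.inl ha, Or.inr hdarts.symm⟩

variable [Finite V]

theorem two_le_lambdaS_of_snd_eq [Nontrivial V] (hn : 2 ≤ n) (hT : T.Preconnected)
    {a b : Fin n} (hab : a ≠ b) (s : V) :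
    2 ≤ ((dirCycle n).cartProd T.biorient).lambdaS {(a, s), (b, s)} := by
  obtain ⟨s', hs'⟩ := exists_ne s
  have h₂ := ((sweeps_cycle_treeCopy hT a s').rebase (v := (b, s')) (by simp)).trans
    (sweeps_treeCopy hT b s')
  rw [arcs_union, union_empty] at h₂
  refine Digraph.two_le_lambdaS (nontrivial_pair (by simp [hab]))
    ((sweeps_cycle a s).isStrongSubgraphOn (arcs_subset_arcSet _ _)
      (by simp [insert_subset_iff]))
    (h₂.isStrongSubgraphOn (arcs_subset_arcSet _ _) (by simp [insert_subset_iff]))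
    (disjoint_arcs hn ?_ (empty_disjoint _))
  exact disjoint_prod.mpr (Or.inr (disjoint_singleton.mpr hs'.symm))

theorem two_le_lambdaS_of_ne_of_ne (hn : 2 ≤ n) (hT : T.Preconnected) {a b : Fin n} {s t : V}
    (hab : a ≠ b) (hst : s ≠ t) :
    2 ≤ ((dirCycle n).cartProd T.biorient).lambdaS {(a, s), (b, t)} := by
  refine Digraph.two_le_lambdaS (nontrivial_pair (by simp [hab]))
    ((sweeps_cycle_treeCopy hT b s).isStrongSubgraphOn (arcs_subset_arcSet _ _)
      (by simp [insert_subset_iff]))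
    ((sweeps_cycle_treeCopy hT a t).isStrongSubgraphOn (arcs_subset_arcSet _ _)
      (by simp [insert_subset_iff])) (disjoint_arcs hn ?_ ?_)
  · exact disjoint_prod.mpr (Or.inr (disjoint_singleton.mpr hst))
  · exact disjoint_prod.mpr (Or.inl (disjoint_singleton.mpr hab.symm))

theorem two_le_lambdaS_of_fst_eq (hn : 2 ≤ n) (hT : T.Preconnected) (a : Fin n) {s t : V}
    (hst : s ≠ t) : 2 ≤ ((dirCycle n).cartProd T.biorient).lambdaS {(a, s), (a, t)} := by
  classical
  obtain ⟨p, hp⟩ := (hT s t).some.toPath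
  refine Digraph.two_le_lambdaS (nontrivial_pair (by simp [hst]))
    (isStrongSubgraphOn_loopArcs a p) ?_ (disjoint_loopArcs hn a hst hp.isTrail)
  rw [pair_comm]
  exact isStrongSubgraphOn_loopArcs a p.reverse

theorem two_le_lambdaS [Nontrivial V] (hn : 2 ≤ n) (hT : T.Preconnected)
    {S : Set (Fin n × V)} (hS : S.ncard = 2) :
    2 ≤ ((dirCycle n).cartProd T.biorient).lambdaS S := by
  obtain ⟨⟨a, s⟩, ⟨b, t⟩, hne, rfl⟩ := ncard_eq_two.mp hS
  by_cases hst : s = t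
  · subst hst
    exact two_le_lambdaS_of_snd_eq hn hT (by simpa using hne) s
  by_cases hab : a = b
  · subst hab
    exact two_le_lambdaS_of_fst_eq hn hT a hst
  exact two_le_lambdaS_of_ne_of_ne hn hT hab hst

end CycleTreeProduct

theorem stmt14 {V : Type*} [Fintype V] (n : ℕ) (hn : 3 ≤ n)
    (T : SimpleGraph V) (hT : T.IsTree) (hm : 2 ≤ Fintype.card V) :
    ((dirCycle n).cartProd T.biorient).lambdaK 2 = 2 := by
  classical
  have : NeZero n := ⟨by omega⟩
  have : Nontrivial V := Fintype.one_lt_card_iff_nontrivial.mp hm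
  have : Nontrivial (Fin n) := Fin.nontrivial_iff_two_le.mpr (by omega)
  obtain ⟨ℓ, hℓ⟩ := hT.exists_vert_degree_one_of_nontrivial
  obtain ⟨v, hv⟩ := exists_ne ((0 : Fin n), ℓ)
  refine Digraph.lambdaK_eq_of_forall_le_of_exists
    (fun S hS => CycleTreeProduct.two_le_lambdaS (by omega) hT.connected.preconnected hS)
    ⟨{(0, ℓ), v}, Set.ncard_pair hv.symm, ?_⟩
  exact (Digraph.lambdaS_le_outDeg_s14 (Set.nontrivial_pair hv.symm) (Set.mem_insert _ _)).trans
    (dirCycle_cartProd_outDeg_le_two hℓ n 0)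
end
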